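/- arXiv:1409.0972 — 8 statements merged into one kernel-verified Lean document; each statement's English description precedes it below -/
import Mathlib

section
/- Let T be a 3-tournament on n vertices whose incidence matrix column space S_T has rank d. If T contains a cycle, then T contains a cycle of length at most d+1. -/
/-- The signed indicator of the directed edge `u → v`, as a (skew-symmetric) function on
ordered pairs of vertices: entry `+1` at `(u, v)`, `-1` at `(v, u)`, `0` elsewhere.
A vector indexed by 2-sets `{i < j}` with entry `+1` for an induced edge `i → j` and `-1`
for `j → i` is recorded by its values on ordered pairs. -/
def edgeVec {V : Type*} [DecidableEq V] (u v : V) : V → V → ℝ := fun i j =>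
  (if i = u ∧ j = v then 1 else 0) - (if i = v ∧ j = u then 1 else 0)

/-- The signed incidence vector of the oriented triple `→abc`, which induces the directed
edges `a → b`, `b → c`, `c → a`. -/
def incVec {V : Type*} [DecidableEq V] (a b c : V) : V → V → ℝ :=
  edgeVec a b + edgeVec b c + edgeVec c a

/-- Vertices are `Fin n`; an (oriented) triple is recorded as an ordered triple. -/
abbrev Triple (n : ℕ) := Fin n × Fin n × Fin n

/-- The ordered triple `(a, b, c)` is sorted: `a < b < c`. -/
def Sorted3 {n : ℕ} (p : Triple n) : Prop := p.1 < p.2.1 ∧ p.2.1 < p.2.2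

instance {n : ℕ} : DecidablePred (Sorted3 (n := n)) := fun _ => instDecidableAnd

/-- An orientation function `ω` assigns to each (sorted) triple one of its two cyclic
orientations: `true` for `→abc`, `false` for `→acb`.  The incidence vector of the triple
`{a, b, c}` under this orientation. -/
def oVec {n : ℕ} (ω : Triple n → Bool) (p : Triple n) : Fin n → Fin n → ℝ :=
  if ω p then incVec p.1 p.2.1 p.2.2 else incVec p.1 p.2.2 p.2.1

/-- `C` is a cycle of the oriented 3-graph with (sorted) triple set `D` and orientation `ω`:
a nonempty subset of `D` admitting strictly positive weights whose weighted incidence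
vectors sum to zero. -/
def IsCycle {n : ℕ} (ω : Triple n → Bool) (D : Finset (Triple n)) (C : Finset (Triple n)) :
    Prop :=
  C.Nonempty ∧ C ⊆ D ∧
    ∃ α : Triple n → ℝ, (∀ p ∈ C, 0 < α p) ∧ ∑ p ∈ C, α p • oVec ω p = 0

/-- The triple set of the complete oriented 3-graph (3-tournament) on `n` vertices: all
sorted triples. -/
def allTriples (n : ℕ) : Finset (Triple n) := Finset.univ.filter Sorted3

/-- The column space of the incidence matrix of the 3-tournament on `n` vertices with
orientation `ω`: the span of the incidence vectors of all its oriented triples. -/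
def colSpace {n : ℕ} (ω : Triple n → Bool) : Submodule ℝ (Fin n → Fin n → ℝ) :=
  Submodule.span ℝ (oVec ω '' {p | Sorted3 p})

open Finset Module

lemma cycle_reduce {n d : ℕ} (ω : Triple n → Bool)
    (hrank : Module.finrank ℝ (colSpace ω) = d)
    {C : Finset (Triple n)} (hC : IsCycle ω (allTriples n) C)
    (hcard : d + 1 < C.card) :
    ∃ C', IsCycle ω (allTriples n) C' ∧ C'.card < C.card := by
  classical
  obtain ⟨hne, hsub, α, hαpos, hsum⟩ := hC
  obtain ⟨p0, hp0⟩ := hne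
  set C' := C.erase p0 with hC'
  have hcardC' : d < C'.card := by
    have h1 : C'.card = C.card - 1 := Finset.card_erase_of_mem hp0
    omega
  -- vectors of C' are not linearly independent
  have hmem : ∀ p ∈ C, oVec ω p ∈ colSpace ω := by
    intro p hp
    have : Sorted3 p := by
      have := hsub hp
      simpa [allTriples] using this
    exact Submodule.subset_span ⟨p, this, rfl⟩
  have hnli : ¬ LinearIndependent ℝ (fun p : C' => oVec ω (p : Triple n)) := by
    intro h
    have h1 : finrank ℝ (Submodule.span ℝ (Set.range fun p : C' => oVec ω (p : Triple n)))
        = Fintype.card C' := finrank_span_eq_card h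
    have h2 : Submodule.span ℝ (Set.range fun p : C' => oVec ω (p : Triple n)) ≤ colSpace ω := by
      rw [Submodule.span_le]
      rintro _ ⟨i, rfl⟩
      exact hmem _ (Finset.mem_of_mem_erase i.2)
    have h3 := Submodule.finrank_mono h2
    rw [h1, hrank, Fintype.card_coe] at h3
    omega
  rw [Fintype.not_linearIndependent_iff] at hnli
  obtain ⟨g, hgsum, i0, hgi0⟩ := hnli
  -- make sure some coefficient is positive
  set g' : C' → ℝ := if 0 < g i0 then g else -g with hg'
  have hg'sum : ∑ i : C', g' i • oVec ω (i : Triple n) = 0 := by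
    by_cases h : 0 < g i0
    · simp only [hg', if_pos h]; exact hgsum
    · simp only [hg', if_neg h, Pi.neg_apply, neg_smul, Finset.sum_neg_distrib, hgsum, neg_zero]
  have hg'i0 : 0 < g' i0 := by
    by_cases h : 0 < g i0
    · simp [hg', h]
    · have : g i0 < 0 := lt_of_le_of_ne (not_lt.1 h) hgi0
      simp [hg', h]
      linarith
  set β : Triple n → ℝ := fun p => if h : p ∈ C' then g' ⟨p, h⟩ else 0 with hβ
  have hβsum : ∑ p ∈ C', β p • oVec ω p = 0 := by
    rw [← Finset.sum_attach C' (fun p => β p • oVec ω p)]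
    rw [← hg'sum]
    apply Finset.sum_congr rfl
    intro i _
    simp [hβ, i.2]
  have hβp0 : β p0 = 0 := by
    simp [hβ, hC']
  -- the set of positive β
  set P := C'.filter (fun p => 0 < β p) with hP
  have hPne : P.Nonempty := ⟨i0, Finset.mem_filter.2 ⟨i0.2, by simpa [hβ, i0.2] using hg'i0⟩⟩
  obtain ⟨q, hqP, hq⟩ := Finset.exists_mem_eq_inf' hPne (fun p => α p / β p)
  set t := P.inf' hPne (fun p => α p / β p) with ht
  have hqC' : q ∈ C' := (Finset.mem_filter.1 hqP).1
  have hqC : q ∈ C := Finset.mem_of_mem_erase hqC'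
  have hβq : 0 < β q := (Finset.mem_filter.1 hqP).2
  have htpos : 0 < t := by
    rw [hq]
    exact div_pos (hαpos q hqC) hβq
  set α' : Triple n → ℝ := fun p => α p - t * β p with hα'
  have hα'nonneg : ∀ p ∈ C, 0 ≤ α' p := by
    intro p hp
    by_cases hβp : 0 < β p
    · have hpC' : p ∈ C' := by
        by_contra h
        simp [hβ, h] at hβp
      have hpP : p ∈ P := Finset.mem_filter.2 ⟨hpC', hβp⟩
      have : t ≤ α p / β p := Finset.inf'_le _ hpP
      have := (le_div_iff₀ hβp).1 this
      simp [hα']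
      linarith
    · have : t * β p ≤ 0 := mul_nonpos_of_nonneg_of_nonpos htpos.le (not_lt.1 hβp)
      have := hαpos p hp
      simp [hα']
      linarith
  have hα'q : α' q = 0 := by
    simp [hα', hq, div_mul_cancel₀ _ (ne_of_gt hβq)]
  have hα'p0 : 0 < α' p0 := by
    simp [hα', hβp0]
    exact hαpos p0 hp0
  have hβsumC : ∑ p ∈ C, β p • oVec ω p = 0 := by
    rw [← Finset.add_sum_erase C _ hp0, hβp0, ← hC', hβsum]
    simp
  have hα'sum : ∑ p ∈ C, α' p • oVec ω p = 0 := by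
    have : ∀ p ∈ C, α' p • oVec ω p = α p • oVec ω p - t • (β p • oVec ω p) := by
      intro p _
      simp [hα', sub_smul, mul_smul]
    rw [Finset.sum_congr rfl this, Finset.sum_sub_distrib, hsum, ← Finset.smul_sum, hβsumC]
    simp
  set C'' := C.filter (fun p => 0 < α' p) with hC''
  refine ⟨C'', ⟨⟨p0, Finset.mem_filter.2 ⟨hp0, hα'p0⟩⟩, fun p hp => hsub (Finset.mem_filter.1 hp).1,
    α', fun p hp => (Finset.mem_filter.1 hp).2, ?_⟩, ?_⟩
  · rw [← hα'sum]
    apply Finset.sum_filter_of_ne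
    intro p hp hne0
    rcases lt_or_eq_of_le (hα'nonneg p hp) with h | h
    · exact h
    · exfalso; apply hne0; rw [← h, zero_smul]
  · have hsub' : C'' ⊆ C.erase q := by
      intro p hp
      obtain ⟨hpC, hppos⟩ := Finset.mem_filter.1 hp
      refine Finset.mem_erase.2 ⟨?_, hpC⟩
      rintro rfl
      rw [hα'q] at hppos
      exact lt_irrefl _ hppos
    calc C''.card ≤ (C.erase q).card := Finset.card_le_card hsub'
      _ < C.card := Finset.card_erase_lt_of_mem hqC

/-- Let `T` be a 3-tournament on `n` vertices whose incidence-matrix column space has rank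
`d`.  If `T` contains a cycle, then `T` contains a cycle of length at most `d + 1`. -/
theorem shortCycle_of_rank {n d : ℕ} (ω : Triple n → Bool)
    (hrank : Module.finrank ℝ (colSpace ω) = d)
    (hcyc : ∃ C, IsCycle ω (allTriples n) C) :
    ∃ C, IsCycle ω (allTriples n) C ∧ C.card ≤ d + 1 := by
  obtain ⟨C, hC⟩ := hcyc
  have key : ∀ m (C : Finset (Triple n)), IsCycle ω (allTriples n) C → C.card ≤ m →
      ∃ C', IsCycle ω (allTriples n) C' ∧ C'.card ≤ d + 1 := by
    intro m
    induction m with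
    | zero => intro C hC hcard; exact ⟨C, hC, by omega⟩
    | succ m ih =>
      intro C hC hcard
      by_cases h : C.card ≤ d + 1
      · exact ⟨C, hC, h⟩
      · obtain ⟨C', hC', hlt⟩ := cycle_reduce ω hrank hC (by omega)
        exact ih C' hC' (by omega)
  exact key C.card C hC le_rfl
end

section
/- For a 3-tournament T on n vertices (n ≥ 2), the column space of its incidence matrix has rank at most C(n,2) − n + 1. -/
/-! Let `0` be the least vertex. Every oriented triple `→abc` satisfies the cocycle identity
`→abc = →0ab + →0bc - →0ac`, and reversing a triple negates its vector, so the column space lies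
in the span of the `C(n-1, 2)` vectors `→0ij` with `0 < i < j`; and `C(n-1, 2) = C(n, 2) - n + 1`. -/

open Module Submodule

section
variable {V : Type*} [DecidableEq V]

lemma incVec_swap_right (a b c : V) : incVec a c b = -incVec a b c := by
  funext i j
  simp only [incVec, edgeVec, Pi.add_apply, Pi.neg_apply]
  ring

lemma incVec_eq_add_sub (z a b c : V) :
    incVec a b c = incVec z a b + incVec z b c - incVec z a c := by
  funext i j
  simp only [incVec, edgeVec, Pi.add_apply, Pi.sub_apply]
  ring

end

def botIncVecs (V : Type*) [LinearOrder V] [OrderBot V] : Set (V → V → ℝ) :=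
  (fun x : V × V => incVec ⊥ x.1 x.2) '' {x | ⊥ < x.1 ∧ x.1 < x.2}

section
variable {V : Type*} [LinearOrder V] [OrderBot V]

lemma incVec_mem_span_botIncVecs {a b c : V} (hab : a < b) (hbc : b < c) :
    incVec a b c ∈ span ℝ (botIncVecs V) := by
  have mem {i j : V} (hi : ⊥ < i) (hij : i < j) : incVec ⊥ i j ∈ span ℝ (botIncVecs V) :=
    subset_span ⟨(i, j), ⟨hi, hij⟩, rfl⟩
  have hb : ⊥ < b := bot_le.trans_lt hab
  rcases (bot_le : ⊥ ≤ a).eq_or_lt with rfl | ha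
  · exact mem hb hbc
  · rw [incVec_eq_add_sub ⊥ a b c]
    exact sub_mem (add_mem (mem ha hab) (mem hb hbc)) (mem ha (hab.trans hbc))

lemma finrank_span_botIncVecs_le [Fintype V] :
    finrank ℝ (span ℝ (botIncVecs V)) ≤ (Fintype.card V - 1).choose 2 := by
  classical
  set pairs : Finset (V × V) := {x ∈ Finset.univ.erase ⊥ ×ˢ Finset.univ.erase ⊥ | x.1 < x.2}
  have hpairs : botIncVecs V = ↑(pairs.image fun x => incVec ⊥ x.1 x.2) := by
    ext v
    simp only [botIncVecs, pairs, Set.mem_image, Set.mem_ofPred_eq, Finset.coe_image,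
      Finset.coe_filter, Finset.mem_product, Finset.mem_erase, Finset.mem_univ, and_true]
    exact exists_congr fun x => and_congr_left fun _ =>
      ⟨fun h => ⟨⟨h.1.ne', (h.1.trans h.2).ne'⟩, h.2⟩, fun h => ⟨bot_lt_iff_ne_bot.2 h.1.1, h.2⟩⟩
  calc finrank ℝ (span ℝ (botIncVecs V))
      ≤ (pairs.image fun x => incVec ⊥ x.1 x.2).card := hpairs ▸ finrank_span_finset_le_card _
    _ ≤ pairs.card := Finset.card_image_le
    _ = (Fintype.card V - 1).choose 2 := by
      rw [Finset.card_product_filter_lt, Finset.card_erase_of_mem (Finset.mem_univ _),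
        Finset.card_univ]

end

lemma oVec_mem_iff {n : ℕ} (ω : Triple n → Bool) (p : Triple n)
    (S : Submodule ℝ (Fin n → Fin n → ℝ)) : oVec ω p ∈ S ↔ incVec p.1 p.2.1 p.2.2 ∈ S := by
  unfold oVec
  split_ifs
  · rfl
  · rw [incVec_swap_right, neg_mem_iff]

lemma colSpace_le_span_botIncVecs {n : ℕ} (ω : Triple (n + 1) → Bool) :
    colSpace ω ≤ span ℝ (botIncVecs (Fin (n + 1))) :=
  span_le.2 <| Set.image_subset_iff.2 fun p hp =>
    (oVec_mem_iff ω p _).2 (incVec_mem_span_botIncVecs hp.1 hp.2)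

theorem tournament_rank_le_general (n : ℕ) (ω : Triple n → Bool) :
    Module.finrank ℝ (colSpace ω) ≤ n.choose 2 - n + 1 := by
  cases n with
  | zero => simp [finrank_zero_of_subsingleton]
  | succ n =>
    calc finrank ℝ (colSpace ω)
        ≤ finrank ℝ (span ℝ (botIncVecs (Fin (n + 1)))) :=
          finrank_mono (colSpace_le_span_botIncVecs ω)
      _ ≤ n.choose 2 := by simpa using finrank_span_botIncVecs_le (V := Fin (n + 1))
      _ ≤ (n + 1).choose 2 - (n + 1) + 1 := by
          have h : (n + 1).choose 2 = n.choose 1 + n.choose 2 := Nat.choose_succ_succ' n 1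
          rw [Nat.choose_one_right] at h
          omega

/-- For a 3-tournament `T` on `n ≥ 2` vertices, the column space of its incidence matrix
has rank at most `C(n,2) - n + 1`. -/
theorem tournament_rank_le (n : ℕ) (hn : 2 ≤ n) (ω : Triple n → Bool) :
    Module.finrank ℝ (colSpace ω) ≤ n.choose 2 - n + 1 :=
  tournament_rank_le_general n ω
end

section
/- For each i with 1 ≤ i ≤ n−1, define the vector v_i ∈ R^{C(n,2)} indexed by pairs {j<k} with (v_i)_{jk} = 1 if i = j, −1 if i = k, and 0 otherwise. Then v_1, …, v_{n−1} are linearly independent and each v_i is orthogonal to every column of the incidence matrix of any 3-tournament on [n]. -/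
/-- The vector `v_i ∈ ℝ^{C(n,2)}` indexed by pairs `{j < k}`, with entry `1` if `i = j`,
`-1` if `i = k`, and `0` otherwise (recorded skew-symmetrically on ordered pairs). -/
def vVec {n : ℕ} (i : Fin n) : Fin n → Fin n → ℝ := fun j k =>
  (if j = i then 1 else 0) - (if k = i then 1 else 0)

/- `vVec i` is the coboundary of the indicator of `i`: its pairing with an edge vector is a
difference of potentials, so the pairing with an oriented triple telescopes around the cycle to
zero. Column `m` of `vVec i` is the standard basis vector `e_i` whenever `i ≠ m`, which gives
linear independence of any family of `vVec i` avoiding a common vertex `m`. -/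
lemma sum_vVec_mul_edgeVec {n : ℕ} (i u v : Fin n) :
    ∑ j, ∑ k, vVec i j k * edgeVec u v j k = vVec i u v - vVec i v u := by
  simp only [edgeVec, mul_sub, Finset.sum_sub_distrib, ite_and, mul_ite, mul_one, mul_zero,
    Finset.sum_ite_irrel, Finset.sum_const_zero, Finset.sum_ite_eq', Finset.mem_univ, if_true]

lemma sum_vVec_mul_incVec {n : ℕ} (i a b c : Fin n) :
    ∑ j, ∑ k, vVec i j k * incVec a b c j k = 0 := by
  calc ∑ j, ∑ k, vVec i j k * incVec a b c j k
      = (vVec i a b - vVec i b a) + (vVec i b c - vVec i c b) + (vVec i c a - vVec i a c) := by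
        simp only [incVec, Pi.add_apply, mul_add, Finset.sum_add_distrib, sum_vVec_mul_edgeVec]
    _ = 0 := by simp only [vVec]; ring

lemma sum_vVec_mul_oVec {n : ℕ} (i : Fin n) (ω : Triple n → Bool) (p : Triple n) :
    ∑ j, ∑ k, vVec i j k * oVec ω p j k = 0 := by
  unfold oVec
  split <;> exact sum_vVec_mul_incVec ..

lemma vVec_apply_right_of_ne {n : ℕ} {i m : Fin n} (h : i ≠ m) (j : Fin n) :
    vVec i j m = (Pi.single i 1 : Fin n → ℝ) j := by
  simp [vVec, Pi.single_apply, h.symm]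

lemma linearIndependent_vVec_of_forall_ne {ι : Type*} {n : ℕ} {f : ι → Fin n}
    (hf : Function.Injective f) {m : Fin n} (hm : ∀ i, f i ≠ m) :
    LinearIndependent ℝ (fun i => vVec (f i)) := by
  let column : (Fin n → Fin n → ℝ) →ₗ[ℝ] Fin n → ℝ := (LinearMap.proj m).compLeft (Fin n)
  have hcolumn : ∀ i, column (vVec (f i)) = Pi.single (f i) 1 :=
    fun i => funext (vVec_apply_right_of_ne (hm i))
  refine LinearIndependent.of_comp column ?_
  simpa only [Function.comp_def, hcolumn] using
    (Pi.linearIndependent_single_one (Fin n) ℝ).comp f hf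

/-- The vectors `v_1, …, v_{n-1}` are linearly independent, and each `v_i` is orthogonal
to every column of the incidence matrix of any 3-tournament on `[n]`. -/
theorem vVec_linearIndependent_and_orthogonal (n : ℕ) :
    LinearIndependent ℝ (fun i : Fin (n - 1) =>
      vVec (⟨i.1, lt_of_lt_of_le i.2 (Nat.sub_le n 1)⟩ : Fin n)) ∧
    ∀ (ω : Triple n → Bool) (p : Triple n), Sorted3 p → ∀ i : Fin (n - 1),
      ∑ j : Fin n, ∑ k : Fin n,
        vVec (⟨i.1, lt_of_lt_of_le i.2 (Nat.sub_le n 1)⟩ : Fin n) j k * oVec ω p j k = 0 := by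
  refine ⟨?_, fun ω p _ i => sum_vVec_mul_oVec _ ω p⟩
  cases n with
  | zero => exact linearIndependent_empty_type (ι := Fin 0)
  | succ n =>
    exact linearIndependent_vVec_of_forall_ne (Fin.castLE_injective (Nat.sub_le _ 1))
      (m := Fin.last n) fun i => (Fin.castSucc_lt_last i).ne
end

section
/- If a 3-tournament on n vertices contains a cycle, then it contains a cycle of length at most C(n−1,2) + 1. -/
/-
Fixing a vertex `z`, every oriented triple `→abc` is the sum of the cone triples `→zab`, `→zbc`,
`→zca`, so all incidence vectors lie in the span of the `C(n-1, 2)` triples `→zuv` with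
`z < u < v`. In an inclusion-minimal cycle, removing any one triple leaves a linearly independent
family: otherwise a linear relation among the remaining triples, subtracted from the positive
weights with the largest step that keeps them nonnegative, kills a triple and leaves a smaller
cycle. Hence a minimal cycle has at most `C(n-1, 2) + 1` triples.
-/

def IsPosDependent {ι V : Type*} (𝕜 : Type*) [Semiring 𝕜] [PartialOrder 𝕜] [AddCommMonoid V]
    [Module 𝕜 V] (v : ι → V) (C : Finset ι) : Prop :=
  C.Nonempty ∧ ∃ α : ι → 𝕜, (∀ i ∈ C, 0 < α i) ∧ ∑ i ∈ C, α i • v i = 0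

section PosDependent

variable {ι 𝕜 V : Type*} [Field 𝕜] [LinearOrder 𝕜] [IsStrictOrderedRing 𝕜]
  [AddCommGroup V] [Module 𝕜 V]

theorem exists_ssubset_isPosDependent_of_relation {v : ι → V} {C : Finset ι} {α g : ι → 𝕜}
    (hα : ∀ i ∈ C, 0 < α i) (hαv : ∑ i ∈ C, α i • v i = 0) (hgv : ∑ i ∈ C, g i • v i = 0)
    {i j : ι} (hi : i ∈ C) (hgi : 0 < g i) (hj : j ∈ C) (hgj : g j ≤ 0) :
    ∃ C' ⊂ C, IsPosDependent 𝕜 v C' := by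
  classical
  obtain ⟨k, hk, hk_min⟩ := (C.filter (0 < g ·)).exists_min_image (fun i => α i / g i)
    ⟨i, Finset.mem_filter.2 ⟨hi, hgi⟩⟩
  obtain ⟨hkC, hgk⟩ := Finset.mem_filter.1 hk
  set t := α k / g k
  set β : ι → 𝕜 := fun i => α i - t * g i
  have ht : 0 < t := div_pos (hα k hkC) hgk
  have hβ_nonneg : ∀ i ∈ C, 0 ≤ β i := by
    intro i hi
    rcases lt_or_ge 0 (g i) with hgi | hgi
    · have := (le_div_iff₀ hgi).1 (hk_min i (Finset.mem_filter.2 ⟨hi, hgi⟩))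
      simp only [β]; linarith
    · have := hα i hi
      simp only [β]; nlinarith
  have hβk : β k = 0 := by simp only [β, t]; field_simp; ring
  have hβv : ∑ i ∈ C, β i • v i = 0 := by
    simp only [β, sub_smul, mul_smul, Finset.sum_sub_distrib, ← Finset.smul_sum, hαv, hgv,
      smul_zero, sub_zero]
  refine ⟨C.filter (0 < β ·), Finset.filter_ssubset.2 ⟨k, hkC, by simp [hβk]⟩,
    ⟨j, Finset.mem_filter.2 ⟨hj, ?_⟩⟩, β, fun i hi => (Finset.mem_filter.1 hi).2, ?_⟩
  · have := hα j hj
    simp only [β]; nlinarith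
  · rw [Finset.sum_filter_of_ne fun i hi hne => (hβ_nonneg i hi).lt_of_ne' ?_, hβv]
    rintro h
    simp [h] at hne

theorem IsPosDependent.exists_ssubset [DecidableEq ι] {v : ι → V} {C : Finset ι}
    (hC : IsPosDependent 𝕜 v C) {p : ι} (hp : p ∈ C) (hdep : ¬ LinearIndepOn 𝕜 v ↑(C.erase p)) :
    ∃ C' ⊂ C, IsPosDependent 𝕜 v C' := by
  obtain ⟨-, α, hα, hαv⟩ := hC
  obtain ⟨g, hgv, i, hi, hgi⟩ := not_linearIndepOn_finset_iff.1 hdep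
  set g' := Function.update g p 0
  have hg'v : ∑ j ∈ C, g' j • v j = 0 := by
    rw [← Finset.sum_erase C (a := p) (by simp [g']), ← hgv]
    exact Finset.sum_congr rfl fun j hj => by simp [g', Finset.ne_of_mem_erase hj]
  have hg'i : g' i = g i := Function.update_of_ne (Finset.ne_of_mem_erase hi) _ _
  have hg'p : g' p = 0 := Function.update_self _ _ _
  have hiC := Finset.mem_of_mem_erase hi
  rcases hgi.lt_or_gt with hneg | hpos
  · refine exists_ssubset_isPosDependent_of_relation (g := -g') hα hαv ?_ hiC ?_ hp (by simp [hg'p])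
    · simp [neg_smul, hg'v]
    · simpa [hg'i] using hneg
  · exact exists_ssubset_isPosDependent_of_relation hα hαv hg'v hiC (hg'i ▸ hpos) hp hg'p.le

theorem IsPosDependent.exists_subset_linearIndepOn_erase [DecidableEq ι] {v : ι → V}
    {C : Finset ι} (hC : IsPosDependent 𝕜 v C) :
    ∃ C' ⊆ C, IsPosDependent 𝕜 v C' ∧ ∀ p ∈ C', LinearIndepOn 𝕜 v ↑(C'.erase p) := by
  induction C using Finset.strongInduction with
  | H C ih =>
    by_cases hindep : ∀ p ∈ C, LinearIndepOn 𝕜 v ↑(C.erase p)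
    · exact ⟨C, subset_rfl, hC, hindep⟩
    push Not at hindep
    obtain ⟨p, hp, hdep⟩ := hindep
    obtain ⟨C', hC'C, hC'⟩ := hC.exists_ssubset hp hdep
    obtain ⟨C'', hC''C', hC'', hindep''⟩ := ih C' hC'C hC'
    exact ⟨C'', hC''C'.trans hC'C.subset, hC'', hindep''⟩

end PosDependent

theorem LinearIndepOn.finset_card_le_of_subset_span {ι κ K V : Type*} [DivisionRing K]
    [AddCommGroup V] [Module K V] [Fintype κ] {v : ι → V} {s : Finset ι}
    (hs : LinearIndepOn K v ↑s) (w : κ → V)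
    (hvw : ∀ i ∈ s, v i ∈ Submodule.span K (Set.range w)) :
    s.card ≤ Fintype.card κ := by
  have := FiniteDimensional.span_of_finite K (Set.finite_range w)
  calc s.card = Module.finrank K (Submodule.span K (Set.range fun i : (s : Set ι) => v i)) := by
        rw [finrank_span_eq_card hs]; simp
    _ ≤ Module.finrank K (Submodule.span K (Set.range w)) :=
        Submodule.finrank_mono (Submodule.span_le.2 (Set.range_subset_iff.2 fun i => hvw i i.2))
    _ ≤ Fintype.card κ := finrank_range_le_card w

section Incidence

variable {V : Type*} [DecidableEq V]

theorem incVec_eq_add_cone (z a b c : V) :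
    incVec a b c = incVec z a b + incVec z b c + incVec z c a := by
  funext i j
  simp only [incVec, edgeVec, Pi.add_apply]
  ring

theorem incVec_swap (z u v : V) : incVec z v u = -incVec z u v := by
  funext i j
  simp only [incVec, edgeVec, Pi.add_apply, Pi.neg_apply]
  ring

theorem incVec_self_left (u v : V) : incVec u u v = 0 := by
  funext i j
  simp only [incVec, edgeVec, Pi.add_apply, Pi.zero_apply]
  ring

theorem incVec_self_right (u v : V) : incVec u v v = 0 := by
  funext i j
  simp only [incVec, edgeVec, Pi.add_apply, Pi.zero_apply]
  ring

end Incidence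

def coneVec (m : ℕ) (x : {x : Fin m × Fin m // x.1 < x.2}) : Fin (m + 1) → Fin (m + 1) → ℝ :=
  incVec 0 x.1.1.succ x.1.2.succ

section Cone

variable {m : ℕ}

theorem card_coneVec_domain :
    Fintype.card {x : Fin m × Fin m // x.1 < x.2} = m.choose 2 := by
  rw [Fintype.card_subtype, Fintype.card_product_filter_lt, Fintype.card_fin]

theorem incVec_zero_mem_span_coneVec (u v : Fin (m + 1)) :
    incVec 0 u v ∈ Submodule.span ℝ (Set.range (coneVec m)) := by
  induction u using Fin.cases with
  | zero => rw [incVec_self_left]; exact zero_mem _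
  | succ a =>
    induction v using Fin.cases with
    | zero => rw [incVec_swap, incVec_self_left, neg_zero]; exact zero_mem _
    | succ b =>
      rcases lt_trichotomy a b with hab | rfl | hba
      · exact Submodule.subset_span ⟨⟨(a, b), hab⟩, rfl⟩
      · rw [incVec_self_right]; exact zero_mem _
      · rw [incVec_swap]; exact neg_mem (Submodule.subset_span ⟨⟨(b, a), hba⟩, rfl⟩)

theorem oVec_mem_span_coneVec (ω : Triple (m + 1) → Bool) (p : Triple (m + 1)) :
    oVec ω p ∈ Submodule.span ℝ (Set.range (coneVec m)) := by
  have hinc (a b c : Fin (m + 1)) : incVec a b c ∈ Submodule.span ℝ (Set.range (coneVec m)) := by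
    rw [incVec_eq_add_cone 0]
    exact add_mem (add_mem (incVec_zero_mem_span_coneVec a b) (incVec_zero_mem_span_coneVec b c))
      (incVec_zero_mem_span_coneVec c a)
  unfold oVec
  split <;> apply hinc

theorem card_le_choose_two_of_linearIndepOn_oVec (ω : Triple (m + 1) → Bool)
    {s : Finset (Triple (m + 1))} (hs : LinearIndepOn ℝ (oVec ω) ↑s) : s.card ≤ m.choose 2 :=
  card_coneVec_domain (m := m) ▸
    hs.finset_card_le_of_subset_span (coneVec m) fun p _ => oVec_mem_span_coneVec ω p

end Cone

theorem isCycle_iff {n : ℕ} (ω : Triple n → Bool) (D C : Finset (Triple n)) :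
    IsCycle ω D C ↔ IsPosDependent ℝ (oVec ω) C ∧ C ⊆ D := by
  unfold IsCycle IsPosDependent
  tauto

/-- If a 3-tournament on `n` vertices contains a cycle, then it contains a cycle of length
at most `C(n-1, 2) + 1`. -/
theorem shortCycle_tournament (n : ℕ) (ω : Triple n → Bool)
    (hcyc : ∃ C, IsCycle ω (allTriples n) C) :
    ∃ C, IsCycle ω (allTriples n) C ∧ C.card ≤ (n - 1).choose 2 + 1 := by
  obtain ⟨C, hC⟩ := hcyc
  obtain ⟨hpos, hCD⟩ := (isCycle_iff ω _ C).1 hC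
  obtain ⟨C', hC'C, hC', hindep⟩ := hpos.exists_subset_linearIndepOn_erase
  obtain ⟨p, hp⟩ := hC'.1
  obtain ⟨m, rfl⟩ : ∃ m, n = m + 1 := Nat.exists_eq_succ_of_ne_zero p.1.pos.ne'
  have hcard := card_le_choose_two_of_linearIndepOn_oVec ω (hindep p hp)
  rw [Finset.card_erase_of_mem hp] at hcard
  refine ⟨C', (isCycle_iff ω _ C').2 ⟨hC', hC'C.trans hCD⟩, ?_⟩
  rw [Nat.add_sub_cancel]
  omega
end

section
/- Let C be an oriented 3-graph on vertex set V such that (i) the only cycle in C consists of all its triples, and (ii) for every oriented 3-set ρ on V not in C, C ∪ {ρ} contains no cycle using ρ. Then the remaining 3-subsets of V can be oriented to form a 3-tournament T in which C is the only cycle. -/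
/-!
Let `L` be the span of the incidence vectors of `C`. A triple `ρ ∉ C` whose vector lay in `L`
would, after adding a large multiple of the positive relation of `C`, close a cycle through `ρ`;
so no such vector lies in `L`. Over the infinite field `ℝ` there is then a functional `φ`
vanishing on `L` and on none of these vectors. Orient every new triple so that `φ` is positive
on it: applying `φ` to a cycle of the tournament shows that the cycle uses no new triple, so it
is a cycle of `C`, hence `C` itself.
-/

open Submodule

lemma exists_pos_add_sum_smul_eq_zero {ι E : Type*} [AddCommGroup E] [Module ℝ E]
    {v : ι → E} {s : Finset ι} {α : ι → ℝ} (hα : ∀ i ∈ s, 0 < α i)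
    (hsum : ∑ i ∈ s, α i • v i = 0) {w : E} (hw : w ∈ span ℝ (v '' s)) :
    ∃ β : ι → ℝ, (∀ i ∈ s, 0 < β i) ∧ w + ∑ i ∈ s, β i • v i = 0 := by
  obtain ⟨l, hl⟩ := (mem_span_image_finset_iff_exists_fun' (R := ℝ)).1 hw
  obtain ⟨t, ht⟩ : ∃ t : ℝ, ∀ i ∈ s, l i < t * α i :=
    ((Filter.eventually_all_finset s).2 fun i hi =>
      (Filter.tendsto_id.atTop_mul_const (hα i hi)).eventually_gt_atTop (l i)).exists
  refine ⟨fun i => t * α i - l i, fun i hi => sub_pos.2 (ht i hi), ?_⟩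
  simp only [sub_smul, Finset.sum_sub_distrib, mul_smul, ← Finset.smul_sum, hsum, hl,
    smul_zero]
  abel

lemma map_eq_zero_of_sum_smul_eq_zero {ι E : Type*} [AddCommGroup E] [Module ℝ E]
    (φ : E →ₗ[ℝ] ℝ) {v : ι → E} {s : Finset ι} {β : ι → ℝ} (hβ : ∀ i ∈ s, 0 < β i)
    (hsum : ∑ i ∈ s, β i • v i = 0) (hφ : ∀ i ∈ s, 0 ≤ φ (v i)) :
    ∀ i ∈ s, φ (v i) = 0 := by
  have hmul : ∑ i ∈ s, β i * φ (v i) = 0 := by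
    simpa only [map_sum, map_smul, smul_eq_mul, map_zero] using congrArg φ hsum
  intro i hi
  have := (Finset.sum_eq_zero_iff_of_nonneg fun j hj => mul_nonneg (hβ j hj).le (hφ j hj)).1
    hmul i hi
  exact (mul_eq_zero.1 this).resolve_left (hβ i hi).ne'

lemma Submodule.exists_dual_le_ker_forall_apply_ne_zero {ι K M : Type*} [Finite ι] [Field K]
    [Infinite K] [AddCommGroup M] [Module K M] (L : Submodule K M) (v : ι → M)
    (hv : ∀ i, v i ∉ L) :
    ∃ φ : Module.Dual K M, L ≤ LinearMap.ker φ ∧ ∀ i, φ (v i) ≠ 0 := by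
  obtain ⟨f, hf⟩ := Module.exists_dual_forall_apply_ne_zero (K := K) (fun i => L.mkQ (v i))
    fun i => by simpa [Submodule.Quotient.mk_eq_zero] using hv i
  exact ⟨f ∘ₗ L.mkQ, by simpa using LinearMap.ker_le_ker_comp L.mkQ f, hf⟩

lemma incVec_swap_s5 {V : Type*} [DecidableEq V] (a b c : V) :
    incVec a c b = -incVec a b c := by
  funext i j
  simp only [incVec, edgeVec, Pi.add_apply, Pi.neg_apply]
  ring

section Orientation

variable {n : ℕ}

lemma abs_map_oVec (φ : (Fin n → Fin n → ℝ) →ₗ[ℝ] ℝ) (ω : Triple n → Bool) (p : Triple n) :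
    |φ (oVec ω p)| = |φ (incVec p.1 p.2.1 p.2.2)| := by
  unfold oVec
  split_ifs
  · rfl
  · rw [incVec_swap_s5, map_neg, abs_neg]

lemma IsCycle.congr {ω ω' : Triple n → Bool} {D D' C' : Finset (Triple n)}
    (h : IsCycle ω D C') (hω : Set.EqOn ω' ω C') (hD' : C' ⊆ D') : IsCycle ω' D' C' := by
  obtain ⟨hne, -, α, hα, hsum⟩ := h
  refine ⟨hne, hD', α, hα, ?_⟩
  rw [← hsum]
  exact Finset.sum_congr rfl fun p hp => by simp only [oVec, hω hp]

lemma IsCycle.map_oVec_eq_zero {ω : Triple n → Bool} {D C' : Finset (Triple n)}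
    (h : IsCycle ω D C') (φ : (Fin n → Fin n → ℝ) →ₗ[ℝ] ℝ)
    (hφ : ∀ p ∈ D, 0 ≤ φ (oVec ω p)) : ∀ p ∈ C', φ (oVec ω p) = 0 := by
  obtain ⟨-, hsub, β, hβ, hsum⟩ := h
  exact map_eq_zero_of_sum_smul_eq_zero φ hβ hsum fun p hp => hφ p (hsub hp)

lemma oVec_notMem_span_of_isCycle {ω : Triple n → Bool} {C : Finset (Triple n)}
    (hcyc : IsCycle ω C C) {ρ : Triple n} (hρ : ρ ∉ C)
    (hadd : ¬ ∃ C', IsCycle ω (insert ρ C) C' ∧ ρ ∈ C') :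
    oVec ω ρ ∉ span ℝ (oVec ω '' C) := by
  intro hmem
  obtain ⟨-, -, α, hα, hsum⟩ := hcyc
  obtain ⟨β, hβ, hβsum⟩ := exists_pos_add_sum_smul_eq_zero hα hsum hmem
  have hβρ : ∀ p ∈ C, Function.update β ρ 1 p = β p := fun p hp =>
    Function.update_of_ne (ne_of_mem_of_not_mem hp hρ) _ _
  refine hadd ⟨insert ρ C, ⟨Finset.insert_nonempty ρ C, subset_rfl, Function.update β ρ 1,
    ?_, ?_⟩, Finset.mem_insert_self ρ C⟩
  · rw [Finset.forall_mem_insert, Function.update_self]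
    exact ⟨one_pos, fun p hp => (hβρ p hp).symm ▸ hβ p hp⟩
  · rw [Finset.sum_insert hρ, Function.update_self, one_smul, ← hβsum,
      Finset.sum_congr rfl fun p hp => by rw [hβρ p hp]]

noncomputable def orientBy (φ : (Fin n → Fin n → ℝ) →ₗ[ℝ] ℝ) (C : Finset (Triple n))
    (ω : Triple n → Bool) (p : Triple n) : Bool :=
  if p ∈ C then ω p else decide (0 < φ (incVec p.1 p.2.1 p.2.2))

lemma orientBy_eqOn (φ : (Fin n → Fin n → ℝ) →ₗ[ℝ] ℝ) (C : Finset (Triple n))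
    (ω : Triple n → Bool) : Set.EqOn (orientBy φ C ω) ω C := fun p hp => by
  simp [orientBy, Finset.mem_coe.1 hp]

lemma map_oVec_orientBy_of_notMem (φ : (Fin n → Fin n → ℝ) →ₗ[ℝ] ℝ) {C : Finset (Triple n)}
    (ω : Triple n → Bool) {p : Triple n} (hp : p ∉ C) :
    φ (oVec (orientBy φ C ω) p) = |φ (incVec p.1 p.2.1 p.2.2)| := by
  by_cases h : 0 < φ (incVec p.1 p.2.1 p.2.2)
  · simp [orientBy, oVec, hp, h, abs_of_pos]
  · simp only [orientBy, oVec, hp, h, if_false, decide_false, Bool.false_eq_true]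
    rw [incVec_swap_s5, map_neg, abs_of_nonpos (not_lt.1 h)]

end Orientation

/-- **Linial–Morgenstern.**  Let `C` be an oriented 3-graph such that (i) the only cycle in
`C` consists of all of its triples, and (ii) no cycle through `ρ` is created by adding any
single oriented 3-set `ρ` (in either orientation).  Then the remaining 3-sets can be
oriented to obtain a 3-tournament in which `C` is the only cycle. -/
theorem extend_to_tournament_unique_cycle {n : ℕ} (ω : Triple n → Bool)
    (C : Finset (Triple n)) (hC : C ⊆ allTriples n)
    (hcyc : IsCycle ω C C)
    (huniq : ∀ C', IsCycle ω C C' → C' = C)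
    (hadd : ∀ ρ ∈ allTriples n, ρ ∉ C → ∀ b : Bool,
      ¬ ∃ C', IsCycle (Function.update ω ρ b) (insert ρ C) C' ∧ ρ ∈ C') :
    ∃ ω' : Triple n → Bool, (∀ p ∈ C, ω' p = ω p) ∧
      IsCycle ω' (allTriples n) C ∧
      ∀ C', IsCycle ω' (allTriples n) C' → C' = C := by
  set L := span ℝ (oVec ω '' C)
  have hout : ∀ p : ↥(allTriples n \ C), oVec ω p ∉ L := fun ⟨p, hp⟩ => by
    obtain ⟨hpT, hpC⟩ := Finset.mem_sdiff.1 hp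
    exact oVec_notMem_span_of_isCycle hcyc hpC
      (by simpa only [Function.update_eq_self] using hadd p hpT hpC (ω p))
  obtain ⟨φ, hφL, hφ⟩ := L.exists_dual_le_ker_forall_apply_ne_zero _ hout
  set ω' := orientBy φ C ω
  have hω' : Set.EqOn ω' ω C := orientBy_eqOn φ C ω
  have hnonneg : ∀ p ∈ allTriples n, 0 ≤ φ (oVec ω' p) := fun p _ => by
    by_cases hpC : p ∈ C
    · simp only [oVec, hω' hpC]
      exact (hφL (subset_span (Set.mem_image_of_mem _ hpC))).ge
    · exact (map_oVec_orientBy_of_notMem φ ω hpC).symm ▸ abs_nonneg _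
  refine ⟨ω', fun p hp => hω' hp, hcyc.congr hω' hC, fun C' hC' => ?_⟩
  have hsub : C' ⊆ C := fun p hp => by
    by_contra hpC
    have h0 := hC'.map_oVec_eq_zero φ hnonneg p hp
    rw [map_oVec_orientBy_of_notMem φ ω hpC, ← abs_map_oVec φ ω, abs_eq_zero] at h0
    exact hφ ⟨p, Finset.mem_sdiff.2 ⟨hC'.2.1 hp, hpC⟩⟩ h0
  exact huniq C' (hC'.congr (hω'.symm.mono hsub) hsub)
end

section
/- Let G be an oriented 3-graph that is a single cycle (its only cycle consists of all its triples), let F = →ijk be a triple of G, and let G' be the (P,F)-attachment on G (delete F, add the 10 triples of P with a,b,c identified with i,j,k and three new vertices x,y,z). Then G' is a single cycle of length |E(G)| + 9. -/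
/-- The incidence vector of an oriented triple recorded as an ordered triple. -/
def cVec {V : Type*} [DecidableEq V] (p : V × V × V) : V → V → ℝ :=
  incVec p.1 p.2.1 p.2.2

/-- The underlying 3-set of an ordered triple. -/
def tripleSet {V : Type*} [DecidableEq V] (p : V × V × V) : Finset V :=
  {p.1, p.2.1, p.2.2}

/-- The vertex set of an oriented 3-graph, given as a finite set of oriented triples. -/
def vertexSet {V : Type*} [DecidableEq V] (G : Finset (V × V × V)) : Finset V :=
  G.biUnion tripleSet

/-- An oriented 3-graph (a finite set of ordered triples, each read as a cyclically
oriented 3-set) is well formed if each triple has three distinct vertices and no two of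
its members share the same underlying 3-set. -/
def WellFormed {V : Type*} [DecidableEq V] (G : Finset (V × V × V)) : Prop :=
  (∀ p ∈ G, p.1 ≠ p.2.1 ∧ p.2.1 ≠ p.2.2 ∧ p.1 ≠ p.2.2) ∧
  ∀ p ∈ G, ∀ q ∈ G, tripleSet p = tripleSet q → p = q

/-- `C` is a cycle of the oriented 3-graph `G`: a nonempty subset of `G` admitting strictly
positive weights whose weighted incidence vectors sum to zero. -/
def IsCycleOn {V : Type*} [DecidableEq V] (G C : Finset (V × V × V)) : Prop :=
  C.Nonempty ∧ C ⊆ G ∧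
    ∃ α : V × V × V → ℝ, (∀ p ∈ C, 0 < α p) ∧ ∑ p ∈ C, α p • cVec p = 0

/-- An oriented 3-graph is a *single cycle* if its only cycle consists of all its
triples. -/
def IsSingleCycle {V : Type*} [DecidableEq V] (G : Finset (V × V × V)) : Prop :=
  IsCycleOn G G ∧ ∀ C, IsCycleOn G C → C = G

/-- A *star system*: a set of triples any two of which intersect exactly in one common
vertex `v`. -/
def IsStarSystem {V : Type*} [DecidableEq V] (S : Finset (V × V × V)) : Prop :=
  ∃ v : V, ∀ p ∈ S, ∀ q ∈ S, p ≠ q → tripleSet p ∩ tripleSet q = {v}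

def Pten {V : Type*} [DecidableEq V] (i j k x y z : V) : Finset (V × V × V) :=
  {(x, y, i), (i, y, z), (i, z, k), (k, z, x), (k, x, y),
   (k, y, j), (j, y, z), (j, z, x), (j, x, i), (x, z, y)}

lemma sum_Pten {V : Type*} [DecidableEq V] {M : Type*} [AddCommMonoid M]
    (i j k x y z : V)
    (hij : i ≠ j) (hik : i ≠ k) (hjk : j ≠ k)
    (hxy : x ≠ y) (hxz : x ≠ z) (hyz : y ≠ z)
    (hxi : x ≠ i) (hxj : x ≠ j) (hxk : x ≠ k)
    (hyi : y ≠ i) (hyj : y ≠ j) (hyk : y ≠ k)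
    (hzi : z ≠ i) (hzj : z ≠ j) (hzk : z ≠ k)
    (f : V × V × V → M) :
    ∑ p ∈ Pten i j k x y z, f p =
      f (x,y,i) + f (i,y,z) + f (i,z,k) + f (k,z,x) + f (k,x,y) +
      f (k,y,j) + f (j,y,z) + f (j,z,x) + f (j,x,i) + f (x,z,y) := by
  have hji := hij.symm; have hki := hik.symm; have hkj := hjk.symm
  have hyx := hxy.symm; have hzx := hxz.symm; have hzy := hyz.symm
  have hix := hxi.symm; have hjx := hxj.symm; have hkx := hxk.symm
  have hiy := hyi.symm; have hjy := hyj.symm; have hky := hyk.symm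
  have hiz := hzi.symm; have hjz := hzj.symm; have hkz := hzk.symm
  unfold Pten
  rw [Finset.sum_insert (by simp [*]), Finset.sum_insert (by simp [*]),
      Finset.sum_insert (by simp [*]), Finset.sum_insert (by simp [*]),
      Finset.sum_insert (by simp [*]), Finset.sum_insert (by simp [*]),
      Finset.sum_insert (by simp [*]), Finset.sum_insert (by simp [*]),
      Finset.sum_insert (by simp [*]), Finset.sum_singleton]
  abel

lemma cVec_eq_zero {V : Type*} [DecidableEq V] (p : V × V × V) (u v : V)
    (h : u ∉ tripleSet p) : cVec p u v = 0 := by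
  simp only [tripleSet, Finset.mem_insert, Finset.mem_singleton, not_or] at h
  obtain ⟨h1, h2, h3⟩ := h
  simp [cVec, incVec, edgeVec, h1, h2, h3]

lemma key_identity {V : Type*} [DecidableEq V] (i j k x y z : V) :
    cVec (x,y,i) + cVec (i,y,z) + cVec (i,z,k) + cVec (k,z,x) + cVec (k,x,y) +
      cVec (k,y,j) + cVec (j,y,z) + cVec (j,z,x) + cVec (j,x,i) +
      (2 : ℝ) • cVec (x,z,y) = cVec (i,j,k) := by
  funext u v
  simp only [cVec, incVec, edgeVec, Pi.add_apply, Pi.smul_apply, smul_eq_mul]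
  ring

lemma key_scaled {V : Type*} [DecidableEq V] (i j k x y z : V) (t : ℝ) :
    t • cVec (x,y,i) + t • cVec (i,y,z) + t • cVec (i,z,k) + t • cVec (k,z,x) +
      t • cVec (k,x,y) + t • cVec (k,y,j) + t • cVec (j,y,z) + t • cVec (j,z,x) +
      t • cVec (j,x,i) + (2 * t) • cVec (x,z,y) = t • cVec ((i,j,k) : V × V × V) := by
  rw [← key_identity i j k x y z]
  funext u v
  simp only [Pi.add_apply, Pi.smul_apply, smul_eq_mul]
  ring

/-- Let `G` be a single cycle, `F = →ijk` a triple of `G`, and `G'` the `(P, F)`-attachment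
on `G`: delete `F` and add the 10 triples of `P` (the projective-plane configuration on
`{x,y,z,a,b,c}` minus `→acb`) with `a, b, c` identified with `i, j, k` and three new
vertices `x, y, z`.  Then `G'` is a single cycle of length `|E(G)| + 9`. -/
theorem P_attachment_single_cycle {V : Type*} [DecidableEq V]
    (G : Finset (V × V × V)) (hWF : WellFormed G) (hG : IsSingleCycle G)
    (i j k : V) (hF : (i, j, k) ∈ G)
    (x y z : V) (hxy : x ≠ y) (hxz : x ≠ z) (hyz : y ≠ z)
    (hx : x ∉ vertexSet G) (hy : y ∉ vertexSet G) (hz : z ∉ vertexSet G)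
    (G' : Finset (V × V × V))
    (hG' : G' = G.erase (i, j, k) ∪
      {(x, y, i), (i, y, z), (i, z, k), (k, z, x), (k, x, y),
       (k, y, j), (j, y, z), (j, z, x), (j, x, i), (x, z, y)}) :
    IsSingleCycle G' ∧ G'.card = G.card + 9 := by
  obtain ⟨hij', hjk', hik'⟩ := hWF.1 (i, j, k) hF
  have hij : i ≠ j := hij'
  have hjk : j ≠ k := hjk'
  have hik : i ≠ k := hik'
  have hiV : i ∈ vertexSet G := Finset.mem_biUnion.mpr ⟨(i,j,k), hF, by simp [tripleSet]⟩
  have hjV : j ∈ vertexSet G := Finset.mem_biUnion.mpr ⟨(i,j,k), hF, by simp [tripleSet]⟩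
  have hkV : k ∈ vertexSet G := Finset.mem_biUnion.mpr ⟨(i,j,k), hF, by simp [tripleSet]⟩
  have hxi : x ≠ i := fun h => hx (h ▸ hiV)
  have hxj : x ≠ j := fun h => hx (h ▸ hjV)
  have hxk : x ≠ k := fun h => hx (h ▸ hkV)
  have hyi : y ≠ i := fun h => hy (h ▸ hiV)
  have hyj : y ≠ j := fun h => hy (h ▸ hjV)
  have hyk : y ≠ k := fun h => hy (h ▸ hkV)
  have hzi : z ≠ i := fun h => hz (h ▸ hiV)
  have hzj : z ≠ j := fun h => hz (h ▸ hjV)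
  have hzk : z ≠ k := fun h => hz (h ▸ hkV)
  have hji := hij.symm; have hki := hik.symm; have hkj := hjk.symm
  have hyx := hxy.symm; have hzx := hxz.symm; have hzy := hyz.symm
  have hix := hxi.symm; have hjx := hxj.symm; have hkx := hxk.symm
  have hiy := hyi.symm; have hjy := hyj.symm; have hky := hyk.symm
  have hiz := hzi.symm; have hjz := hzj.symm; have hkz := hzk.symm
  have hG'2 : G' = G.erase (i, j, k) ∪ Pten i j k x y z := by rw [hG']; rfl
  have hPnotG : ∀ p ∈ G, p ∉ Pten i j k x y z := by
    intro p hp hmem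
    have h1 : p.1 ∈ vertexSet G := Finset.mem_biUnion.mpr ⟨p, hp, by simp [tripleSet]⟩
    have h2 : p.2.1 ∈ vertexSet G := Finset.mem_biUnion.mpr ⟨p, hp, by simp [tripleSet]⟩
    have h3 : p.2.2 ∈ vertexSet G := Finset.mem_biUnion.mpr ⟨p, hp, by simp [tripleSet]⟩
    simp only [Pten, Finset.mem_insert, Finset.mem_singleton] at hmem
    rcases hmem with rfl | rfl | rfl | rfl | rfl | rfl | rfl | rfl | rfl | rfl <;>
      simp_all
  have hdisj : Disjoint (G.erase (i, j, k)) (Pten i j k x y z) :=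
    Finset.disjoint_left.mpr fun p hp => hPnotG p (Finset.mem_of_mem_erase hp)
  have hFnotP : ((i, j, k) : V × V × V) ∉ Pten i j k x y z := by
    simp [Pten, Prod.ext_iff, hij, hik, hjk, hji, hki, hkj, hxy, hxz, hyz, hyx, hzx, hzy, hxi, hxj, hxk, hyi, hyj, hyk, hzi, hzj, hzk, hix, hiy, hiz, hjx, hjy, hjz, hkx, hky, hkz]
  obtain ⟨⟨-, -, α, hαpos, hαsum⟩, huniq⟩ := hG
  constructor
  · constructor
    · -- IsCycleOn G' G'
      obtain ⟨A, hA⟩ : ∃ A : V × V × V → ℝ, A = fun p =>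
          if p = (x, z, y) then 2 * α (i, j, k)
          else if p ∈ Pten i j k x y z then α (i, j, k) else α p := ⟨_, rfl⟩
      have hxzyP : ((x, z, y) : V × V × V) ∈ Pten i j k x y z := by simp [Pten]
      refine ⟨⟨(x, z, y), ?_⟩, Finset.Subset.refl _, A, ?_, ?_⟩
      · rw [hG'2]; exact Finset.mem_union_right _ hxzyP
      · intro p hp
        rw [hG'2, Finset.mem_union] at hp
        simp only [hA]
        by_cases h1 : p = (x, z, y)
        · rw [if_pos h1]; linarith [hαpos _ hF]
        · rw [if_neg h1]
          by_cases h2 : p ∈ Pten i j k x y z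
          · rw [if_pos h2]; exact hαpos _ hF
          · rw [if_neg h2]
            rcases hp with hp | hp
            · exact hαpos p (Finset.mem_of_mem_erase hp)
            · exact absurd hp h2
      · rw [hG'2, Finset.sum_union hdisj]
        have hAer : ∑ p ∈ G.erase (i, j, k), A p • cVec p
            = ∑ p ∈ G.erase (i, j, k), α p • cVec p := by
          refine Finset.sum_congr rfl fun p hp => ?_
          have hpG := Finset.mem_of_mem_erase hp
          have hnp := hPnotG p hpG
          have hne : p ≠ (x, z, y) := fun h => hnp (h ▸ hxzyP)
          simp only [hA]; simp only [if_neg hne, if_neg hnp]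
        have hAP : ∑ p ∈ Pten i j k x y z, A p • cVec p
            = α (i, j, k) • cVec ((i, j, k) : V × V × V) := by
          rw [sum_Pten i j k x y z hij hik hjk hxy hxz hyz hxi hxj hxk hyi hyj hyk hzi hzj hzk]
          have e1 : A (x,y,i) = α (i,j,k) := by simp only [hA]; simp [Pten, hij, hik, hjk, hji, hki, hkj, hxy, hxz, hyz, hyx, hzx, hzy, hxi, hxj, hxk, hyi, hyj, hyk, hzi, hzj, hzk, hix, hiy, hiz, hjx, hjy, hjz, hkx, hky, hkz]
          have e2 : A (i,y,z) = α (i,j,k) := by simp only [hA]; simp [Pten, hij, hik, hjk, hji, hki, hkj, hxy, hxz, hyz, hyx, hzx, hzy, hxi, hxj, hxk, hyi, hyj, hyk, hzi, hzj, hzk, hix, hiy, hiz, hjx, hjy, hjz, hkx, hky, hkz]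
          have e3 : A (i,z,k) = α (i,j,k) := by simp only [hA]; simp [Pten, hij, hik, hjk, hji, hki, hkj, hxy, hxz, hyz, hyx, hzx, hzy, hxi, hxj, hxk, hyi, hyj, hyk, hzi, hzj, hzk, hix, hiy, hiz, hjx, hjy, hjz, hkx, hky, hkz]
          have e4 : A (k,z,x) = α (i,j,k) := by simp only [hA]; simp [Pten, hij, hik, hjk, hji, hki, hkj, hxy, hxz, hyz, hyx, hzx, hzy, hxi, hxj, hxk, hyi, hyj, hyk, hzi, hzj, hzk, hix, hiy, hiz, hjx, hjy, hjz, hkx, hky, hkz]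
          have e5 : A (k,x,y) = α (i,j,k) := by simp only [hA]; simp [Pten, hij, hik, hjk, hji, hki, hkj, hxy, hxz, hyz, hyx, hzx, hzy, hxi, hxj, hxk, hyi, hyj, hyk, hzi, hzj, hzk, hix, hiy, hiz, hjx, hjy, hjz, hkx, hky, hkz]
          have e6 : A (k,y,j) = α (i,j,k) := by simp only [hA]; simp [Pten, hij, hik, hjk, hji, hki, hkj, hxy, hxz, hyz, hyx, hzx, hzy, hxi, hxj, hxk, hyi, hyj, hyk, hzi, hzj, hzk, hix, hiy, hiz, hjx, hjy, hjz, hkx, hky, hkz]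
          have e7 : A (j,y,z) = α (i,j,k) := by simp only [hA]; simp [Pten, hij, hik, hjk, hji, hki, hkj, hxy, hxz, hyz, hyx, hzx, hzy, hxi, hxj, hxk, hyi, hyj, hyk, hzi, hzj, hzk, hix, hiy, hiz, hjx, hjy, hjz, hkx, hky, hkz]
          have e8 : A (j,z,x) = α (i,j,k) := by simp only [hA]; simp [Pten, hij, hik, hjk, hji, hki, hkj, hxy, hxz, hyz, hyx, hzx, hzy, hxi, hxj, hxk, hyi, hyj, hyk, hzi, hzj, hzk, hix, hiy, hiz, hjx, hjy, hjz, hkx, hky, hkz]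
          have e9 : A (j,x,i) = α (i,j,k) := by simp only [hA]; simp [Pten, hij, hik, hjk, hji, hki, hkj, hxy, hxz, hyz, hyx, hzx, hzy, hxi, hxj, hxk, hyi, hyj, hyk, hzi, hzj, hzk, hix, hiy, hiz, hjx, hjy, hjz, hkx, hky, hkz]
          have e10 : A (x,z,y) = 2 * α (i,j,k) := by simp only [hA]; simp
          rw [e1, e2, e3, e4, e5, e6, e7, e8, e9, e10, key_scaled]
        rw [hAer, hAP]
        have h := Finset.sum_erase_add G (fun p => α p • cVec p) hF
        rw [hαsum] at h
        exact h
    · -- uniqueness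
      intro C hC
      obtain ⟨hCne, hCsub, β, hβ, hβsum⟩ := hC
      obtain ⟨b, hb⟩ : ∃ b : V × V × V → ℝ, b = fun p => if p ∈ C then β p else 0 := ⟨_, rfl⟩
      have hbC : ∀ p ∈ C, b p = β p := fun p hp => by rw [hb]; simp [hp]
      have hb0 : ∀ p ∉ C, b p = 0 := fun p hp => by rw [hb]; simp [hp]
      have hbnn : ∀ p, 0 ≤ b p := by
        intro p
        by_cases hp : p ∈ C
        · rw [hbC p hp]; exact le_of_lt (hβ p hp)
        · rw [hb0 p hp]
      have hbposC : ∀ p, 0 < b p → p ∈ C := by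
        intro p hp
        by_contra h
        rw [hb0 p h] at hp
        exact lt_irrefl 0 hp
      have hCsum0 : ∑ p ∈ C, b p • cVec p = 0 := by
        rw [Finset.sum_congr rfl fun p hp => by rw [hbC p hp]]
        exact hβsum
      have hsum0 : ∑ p ∈ G', b p • cVec p = 0 := by
        rw [← Finset.sum_subset hCsub fun p _ hp => by rw [hb0 p hp, zero_smul]]
        exact hCsum0
      have hsplit : ∑ p ∈ G.erase (i, j, k), b p • cVec p
          + ∑ p ∈ Pten i j k x y z, b p • cVec p = 0 := by
        rw [← Finset.sum_union hdisj, ← hG'2]; exact hsum0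
      have hPedge : ∀ u v : V, u ∉ vertexSet G →
          ∑ p ∈ Pten i j k x y z, b p * cVec p u v = 0 := by
        intro u v hu
        have h0 := congrFun (congrFun hsplit u) v
        simp only [Finset.sum_apply, Pi.add_apply, Pi.smul_apply, smul_eq_mul,
          Pi.zero_apply] at h0
        have h1 : ∑ p ∈ G.erase (i, j, k), b p * cVec p u v = 0 :=
          Finset.sum_eq_zero fun p hp => by
            rw [cVec_eq_zero p u v fun hm =>
              hu (Finset.mem_biUnion.mpr ⟨p, Finset.mem_of_mem_erase hp, hm⟩), mul_zero]
        rw [h1, zero_add] at h0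
        exact h0
      have E1 := hPedge x y hx
      rw [sum_Pten i j k x y z hij hik hjk hxy hxz hyz hxi hxj hxk hyi hyj hyk hzi hzj hzk] at E1; simp [cVec, incVec, edgeVec, hij, hik, hjk, hji, hki, hkj, hxy, hxz, hyz, hyx, hzx, hzy, hxi, hxj, hxk, hyi, hyj, hyk, hzi, hzj, hzk, hix, hiy, hiz, hjx, hjy, hjz, hkx, hky, hkz] at E1
      have E2 := hPedge y z hy
      rw [sum_Pten i j k x y z hij hik hjk hxy hxz hyz hxi hxj hxk hyi hyj hyk hzi hzj hzk] at E2; simp [cVec, incVec, edgeVec, hij, hik, hjk, hji, hki, hkj, hxy, hxz, hyz, hyx, hzx, hzy, hxi, hxj, hxk, hyi, hyj, hyk, hzi, hzj, hzk, hix, hiy, hiz, hjx, hjy, hjz, hkx, hky, hkz] at E2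
      have E3 := hPedge x z hx
      rw [sum_Pten i j k x y z hij hik hjk hxy hxz hyz hxi hxj hxk hyi hyj hyk hzi hzj hzk] at E3; simp [cVec, incVec, edgeVec, hij, hik, hjk, hji, hki, hkj, hxy, hxz, hyz, hyx, hzx, hzy, hxi, hxj, hxk, hyi, hyj, hyk, hzi, hzj, hzk, hix, hiy, hiz, hjx, hjy, hjz, hkx, hky, hkz] at E3
      have E4 := hPedge x i hx
      rw [sum_Pten i j k x y z hij hik hjk hxy hxz hyz hxi hxj hxk hyi hyj hyk hzi hzj hzk] at E4; simp [cVec, incVec, edgeVec, hij, hik, hjk, hji, hki, hkj, hxy, hxz, hyz, hyx, hzx, hzy, hxi, hxj, hxk, hyi, hyj, hyk, hzi, hzj, hzk, hix, hiy, hiz, hjx, hjy, hjz, hkx, hky, hkz] at E4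
      have E5 := hPedge y i hy
      rw [sum_Pten i j k x y z hij hik hjk hxy hxz hyz hxi hxj hxk hyi hyj hyk hzi hzj hzk] at E5; simp [cVec, incVec, edgeVec, hij, hik, hjk, hji, hki, hkj, hxy, hxz, hyz, hyx, hzx, hzy, hxi, hxj, hxk, hyi, hyj, hyk, hzi, hzj, hzk, hix, hiy, hiz, hjx, hjy, hjz, hkx, hky, hkz] at E5
      have E6 := hPedge z i hz
      rw [sum_Pten i j k x y z hij hik hjk hxy hxz hyz hxi hxj hxk hyi hyj hyk hzi hzj hzk] at E6; simp [cVec, incVec, edgeVec, hij, hik, hjk, hji, hki, hkj, hxy, hxz, hyz, hyx, hzx, hzy, hxi, hxj, hxk, hyi, hyj, hyk, hzi, hzj, hzk, hix, hiy, hiz, hjx, hjy, hjz, hkx, hky, hkz] at E6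
      have E7 := hPedge z k hz
      rw [sum_Pten i j k x y z hij hik hjk hxy hxz hyz hxi hxj hxk hyi hyj hyk hzi hzj hzk] at E7; simp [cVec, incVec, edgeVec, hij, hik, hjk, hji, hki, hkj, hxy, hxz, hyz, hyx, hzx, hzy, hxi, hxj, hxk, hyi, hyj, hyk, hzi, hzj, hzk, hix, hiy, hiz, hjx, hjy, hjz, hkx, hky, hkz] at E7
      have E8 := hPedge x k hx
      rw [sum_Pten i j k x y z hij hik hjk hxy hxz hyz hxi hxj hxk hyi hyj hyk hzi hzj hzk] at E8; simp [cVec, incVec, edgeVec, hij, hik, hjk, hji, hki, hkj, hxy, hxz, hyz, hyx, hzx, hzy, hxi, hxj, hxk, hyi, hyj, hyk, hzi, hzj, hzk, hix, hiy, hiz, hjx, hjy, hjz, hkx, hky, hkz] at E8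
      have E9 := hPedge y k hy
      rw [sum_Pten i j k x y z hij hik hjk hxy hxz hyz hxi hxj hxk hyi hyj hyk hzi hzj hzk] at E9; simp [cVec, incVec, edgeVec, hij, hik, hjk, hji, hki, hkj, hxy, hxz, hyz, hyx, hzx, hzy, hxi, hxj, hxk, hyi, hyj, hyk, hzi, hzj, hzk, hix, hiy, hiz, hjx, hjy, hjz, hkx, hky, hkz] at E9
      have E10 := hPedge y j hy
      rw [sum_Pten i j k x y z hij hik hjk hxy hxz hyz hxi hxj hxk hyi hyj hyk hzi hzj hzk] at E10; simp [cVec, incVec, edgeVec, hij, hik, hjk, hji, hki, hkj, hxy, hxz, hyz, hyx, hzx, hzy, hxi, hxj, hxk, hyi, hyj, hyk, hzi, hzj, hzk, hix, hiy, hiz, hjx, hjy, hjz, hkx, hky, hkz] at E10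
      have E11 := hPedge z j hz
      rw [sum_Pten i j k x y z hij hik hjk hxy hxz hyz hxi hxj hxk hyi hyj hyk hzi hzj hzk] at E11; simp [cVec, incVec, edgeVec, hij, hik, hjk, hji, hki, hkj, hxy, hxz, hyz, hyx, hzx, hzy, hxi, hxj, hxk, hyi, hyj, hyk, hzi, hzj, hzk, hix, hiy, hiz, hjx, hjy, hjz, hkx, hky, hkz] at E11
      have E12 := hPedge x j hx
      rw [sum_Pten i j k x y z hij hik hjk hxy hxz hyz hxi hxj hxk hyi hyj hyk hzi hzj hzk] at E12; simp [cVec, incVec, edgeVec, hij, hik, hjk, hji, hki, hkj, hxy, hxz, hyz, hyx, hzx, hzy, hxi, hxj, hxk, hyi, hyj, hyk, hzi, hzj, hzk, hix, hiy, hiz, hjx, hjy, hjz, hkx, hky, hkz] at E12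
      have hB2 : b (i,y,z) = b (x,y,i) := by linarith
      have hB3 : b (i,z,k) = b (x,y,i) := by linarith
      have hB4 : b (k,z,x) = b (x,y,i) := by linarith
      have hB5 : b (k,x,y) = b (x,y,i) := by linarith
      have hB6 : b (k,y,j) = b (x,y,i) := by linarith
      have hB7 : b (j,y,z) = b (x,y,i) := by linarith
      have hB8 : b (j,z,x) = b (x,y,i) := by linarith
      have hB9 : b (j,x,i) = b (x,y,i) := by linarith
      have hB10 : b (x,z,y) = 2 * b (x,y,i) := by linarith
      by_cases ht : b (x,y,i) = 0
      · -- degenerate case: C avoids all new triples, contradiction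
        have hCsubE : C ⊆ G.erase (i, j, k) := by
          intro p hp
          have hpG' := hCsub hp
          rw [hG'2, Finset.mem_union] at hpG'
          rcases hpG' with h | h
          · exact h
          · exfalso
            have hbp : b p = 0 := by
              simp only [Pten, Finset.mem_insert, Finset.mem_singleton] at h
              rcases h with rfl | rfl | rfl | rfl | rfl | rfl | rfl | rfl | rfl | rfl <;>
                linarith
            have : (0 : ℝ) < b p := by rw [hbC p hp]; exact hβ p hp
            linarith
        have hCyc : IsCycleOn G C :=
          ⟨hCne, hCsubE.trans (Finset.erase_subset _ _), β, hβ, hβsum⟩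
        have hCG := huniq C hCyc
        have : (i, j, k) ∈ C := by rw [hCG]; exact hF
        exact absurd (hCsubE this) (Finset.notMem_erase _ _)
      · have htpos : 0 < b (x,y,i) := lt_of_le_of_ne (hbnn _) (Ne.symm ht)
        have hPsubC : Pten i j k x y z ⊆ C := by
          intro q hq
          apply hbposC
          simp only [Pten, Finset.mem_insert, Finset.mem_singleton] at hq
          rcases hq with rfl | rfl | rfl | rfl | rfl | rfl | rfl | rfl | rfl | rfl <;>
            linarith
        have hPs : ∑ p ∈ Pten i j k x y z, b p • cVec p
            = b (x,y,i) • cVec ((i,j,k) : V × V × V) := by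
          rw [sum_Pten i j k x y z hij hik hjk hxy hxz hyz hxi hxj hxk hyi hyj hyk hzi hzj hzk, hB2, hB3, hB4, hB5, hB6, hB7, hB8, hB9, hB10, key_scaled]
        have hCmP : ∑ p ∈ C \ Pten i j k x y z, b p • cVec p
            = -(b (x,y,i) • cVec ((i,j,k) : V × V × V)) := by
          rw [Finset.sum_sdiff_eq_sub hPsubC, hCsum0, hPs, zero_sub]
        have hFnotC : ((i, j, k) : V × V × V) ∉ C := by
          intro h
          have := hCsub h
          rw [hG'2, Finset.mem_union] at this
          rcases this with h' | h'
          · exact Finset.notMem_erase _ _ h'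
          · exact hFnotP h'
        have hFnotD : ((i, j, k) : V × V × V) ∉ C \ Pten i j k x y z :=
          fun h => hFnotC (Finset.mem_sdiff.mp h).1
        obtain ⟨γ, hγ⟩ : ∃ γ : V × V × V → ℝ,
            γ = fun p => if p = (i, j, k) then b (x,y,i) else b p := ⟨_, rfl⟩
        have hDcyc : IsCycleOn G (insert (i, j, k) (C \ Pten i j k x y z)) := by
          refine ⟨⟨(i, j, k), Finset.mem_insert_self _ _⟩, ?_, γ, ?_, ?_⟩
          · intro p hp
            rcases Finset.mem_insert.mp hp with rfl | hp'
            · exact hF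
            · obtain ⟨hpC, hpP⟩ := Finset.mem_sdiff.mp hp'
              have := hCsub hpC
              rw [hG'2, Finset.mem_union] at this
              rcases this with h' | h'
              · exact Finset.mem_of_mem_erase h'
              · exact absurd h' hpP
          · intro p hp
            rcases Finset.mem_insert.mp hp with rfl | hp'
            · simp [hγ]; exact htpos
            · have hpC := (Finset.mem_sdiff.mp hp').1
              have hne : p ≠ (i, j, k) := fun h => hFnotC (h ▸ hpC)
              simp only [hγ]; simp only [if_neg hne]
              rw [hbC p hpC]; exact hβ p hpC
          · rw [Finset.sum_insert hFnotD]
            have h1 : γ (i, j, k) = b (x,y,i) := by simp [hγ]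
            have h2 : ∑ p ∈ C \ Pten i j k x y z, γ p • cVec p
                = ∑ p ∈ C \ Pten i j k x y z, b p • cVec p := by
              refine Finset.sum_congr rfl fun p hp => ?_
              have hpC := (Finset.mem_sdiff.mp hp).1
              have hne : p ≠ (i, j, k) := fun h => hFnotC (h ▸ hpC)
              simp only [hγ]; simp only [if_neg hne]
            rw [h1, h2, hCmP, add_neg_cancel]
        have hDG := huniq _ hDcyc
        apply Finset.Subset.antisymm hCsub
        rw [hG'2]
        apply Finset.union_subset
        · intro p hp
          have hpG : p ∈ G := Finset.mem_of_mem_erase hp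
          have hpD : p ∈ insert (i, j, k) (C \ Pten i j k x y z) := by rw [hDG]; exact hpG
          rcases Finset.mem_insert.mp hpD with rfl | hp'
          · exact absurd hp (Finset.notMem_erase _ _)
          · exact (Finset.mem_sdiff.mp hp').1
        · exact hPsubC
  · -- cardinality
    have hcardP : (Pten i j k x y z).card = 10 := by
      rw [Finset.card_eq_sum_ones, sum_Pten i j k x y z hij hik hjk hxy hxz hyz hxi hxj hxk hyi hyj hyk hzi hzj hzk]
    rw [hG'2, Finset.card_union_of_disjoint hdisj, Finset.card_erase_of_mem hF, hcardP]
    have : 0 < G.card := Finset.card_pos.mpr ⟨_, hF⟩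
    omega
end

section
/- Let G be a single cycle on k vertices of length l containing a star system F = {→ab_ic_i : i = 1,…,d} with all b_i distinct from all c_j. Then the (P,F)-attachment on G is a single cycle on k+3 vertices of length l + 6d + 3, and it contains a star system of size d + 1, namely {→yb_ic_i : i=1,…,d} ∪ {→yxz}. -/
/-!
Each block of seven triples replacing `→a bᵢ cᵢ`, together with the base triples `→xya`, `→ayz`
and twice `→xzy`, has the same incidence vector as `→a bᵢ cᵢ`. Hence every weighting `γ` of `G`
lifts to a weighting of the attachment with the same weighted incidence sum: block `i` carries
`γ (→a bᵢ cᵢ)`, the base triples carry `T = ∑ᵢ γ (→a bᵢ cᵢ)` (twice `T` on `→xzy`), and the other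
triples keep their weights. Conversely, reading a vanishing weighted sum of the attachment at the
pairs through a new vertex shows that every such weighting is a lift. A graph is a single cycle
exactly when its nonnegative weightings with vanishing sum are either zero or strictly positive,
and lifting preserves both alternatives, so the attachment is again a single cycle.
-/

open Finset

section

variable {V : Type*} [DecidableEq V]

lemma cVec_apply_eq_zero_of_notMem {p : V × V × V} {v : V} (hv : v ∉ tripleSet p) (u : V) :
    cVec p u v = 0 := by
  simp only [tripleSet, mem_insert, mem_singleton, not_or] at hv
  simp [cVec, incVec, edgeVec, hv.1, hv.2.1, hv.2.2]

lemma subset_vertexSet {G : Finset (V × V × V)} {p : V × V × V} (hp : p ∈ G) :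
    tripleSet p ⊆ vertexSet G :=
  subset_biUnion_of_mem tripleSet hp

theorem isSingleCycle_iff {G : Finset (V × V × V)} :
    IsSingleCycle G ↔ IsCycleOn G G ∧ ∀ β : V × V × V → ℝ, (∀ p ∈ G, 0 ≤ β p) →
      ∑ p ∈ G, β p • cVec p = 0 → (∀ p ∈ G, β p = 0) ∨ ∀ p ∈ G, 0 < β p := by
  refine ⟨fun ⟨hG, hmin⟩ => ⟨hG, fun β hβ hsum => ?_⟩, fun ⟨hG, hdich⟩ => ⟨hG, ?_⟩⟩
  · rcases (G.filter (0 < β ·)).eq_empty_or_nonempty with hC | hC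
    · rw [filter_eq_empty_iff] at hC
      exact .inl fun p hp => le_antisymm (not_lt.1 (hC hp)) (hβ p hp)
    · have hcyc : IsCycleOn G (G.filter (0 < β ·)) := by
        refine ⟨hC, filter_subset _ _, β, fun p hp => (mem_filter.1 hp).2, ?_⟩
        rw [sum_filter]
        refine (sum_congr rfl fun p hp => ?_).trans hsum
        split_ifs with hpos
        · rfl
        · rw [le_antisymm (not_lt.1 hpos) (hβ p hp), zero_smul]
      refine .inr fun p hp => ?_
      rw [← hmin _ hcyc] at hp
      exact (mem_filter.1 hp).2
  · rintro C ⟨⟨q, hq⟩, hCG, α, hα, hsum⟩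
    have hβ : ∀ p ∈ G, 0 ≤ if p ∈ C then α p else 0 := fun p _ => by
      split_ifs with hp
      exacts [(hα p hp).le, le_rfl]
    have hβsum : ∑ p ∈ G, (if p ∈ C then α p else 0) • cVec p = 0 := by
      simp only [ite_smul, zero_smul, sum_ite_mem, inter_eq_right.2 hCG, hsum]
    rcases hdich _ hβ hβsum with h0 | hpos
    · have := h0 q (hCG hq)
      rw [if_pos hq] at this
      exact absurd this (hα q hq).ne'
    · refine subset_antisymm hCG fun p hp => ?_
      by_contra hpC
      simpa [hpC] using hpos p hp

def attachBase (a x y z : V) : Finset (V × V × V) :=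
  {(x, y, a), (a, y, z), (x, z, y)}

def attachBlock (a b c x y z : V) : Finset (V × V × V) :=
  {(a, z, c), (c, z, x), (c, x, y), (b, c, y), (b, y, z), (b, z, x), (a, b, x)}

lemma cVec_attachBlock_add_attachBase (a b c x y z : V) :
    cVec (a, z, c) + cVec (c, z, x) + cVec (c, x, y) + cVec (b, c, y) + cVec (b, y, z) +
        cVec (b, z, x) + cVec (a, b, x) +
        (cVec (x, y, a) + cVec (a, y, z) + (2 : ℝ) • cVec (x, z, y)) =
      cVec (a, b, c) := by
  funext u v
  simp only [cVec, incVec, edgeVec, Pi.add_apply, Pi.smul_apply, smul_eq_mul]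
  ring

variable {d : ℕ}

def attachment (G : Finset (V × V × V)) (a : V) (b c : Fin d → V) (x y z : V) :
    Finset (V × V × V) :=
  (G \ univ.image fun i => (a, b i, c i)) ∪
    (attachBase a x y z ∪ univ.biUnion fun i => attachBlock a (b i) (c i) x y z)

def IsLiftedWeight (G : Finset (V × V × V)) (a : V) (b c : Fin d → V) (x y z : V)
    (β γ : V × V × V → ℝ) : Prop :=
  (∀ p ∈ G \ univ.image (fun i => (a, b i, c i)), β p = γ p) ∧
  (∀ i, ∀ p ∈ attachBlock a (b i) (c i) x y z, β p = γ (a, b i, c i)) ∧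
  β (x, y, a) = ∑ i, γ (a, b i, c i) ∧ β (a, y, z) = ∑ i, γ (a, b i, c i) ∧
  β (x, z, y) = 2 * ∑ i, γ (a, b i, c i)

structure IsAttachable (G : Finset (V × V × V)) (a : V) (b c : Fin d → V) (x y z : V) :
    Prop where
  injective_b : Function.Injective b
  injective_c : Function.Injective c
  b_ne_c : ∀ i j, b i ≠ c j
  b_ne_a : ∀ i, b i ≠ a
  c_ne_a : ∀ i, c i ≠ a
  mem : ∀ i, (a, b i, c i) ∈ G
  x_ne_y : x ≠ y
  x_ne_z : x ≠ z
  y_ne_z : y ≠ z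
  x_notMem : x ∉ vertexSet G
  y_notMem : y ∉ vertexSet G
  z_notMem : z ∉ vertexSet G

variable {G : Finset (V × V × V)} {a x y z : V} {b c : Fin d → V}

lemma mem_attachment_of_mem_attachBlock {p : V × V × V} (i : Fin d)
    (hp : p ∈ attachBlock a (b i) (c i) x y z) : p ∈ attachment G a b c x y z :=
  mem_union_right _ (mem_union_right _ (mem_biUnion.2 ⟨i, mem_univ i, hp⟩))

lemma mem_attachment_of_mem_attachBase {p : V × V × V} (hp : p ∈ attachBase a x y z) :
    p ∈ attachment G a b c x y z :=
  mem_union_right _ (mem_union_left _ hp)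

lemma star_subset_attachment :
    insert (x, z, y) (univ.image fun i => (b i, c i, y)) ⊆ attachment G a b c x y z :=
  insert_subset (mem_attachment_of_mem_attachBase (by simp [attachBase]))
    (image_subset_iff.2 fun i _ => mem_attachment_of_mem_attachBlock i (by simp [attachBlock]))

lemma IsLiftedWeight.exists_mem_attachment_eq {β γ : V × V × V → ℝ}
    (hβ : IsLiftedWeight G a b c x y z β γ) {p : V × V × V} (hp : p ∈ G) :
    ∃ q ∈ attachment G a b c x y z, γ p = β q := by
  by_cases hpF : p ∈ univ.image (fun i => (a, b i, c i))
  · obtain ⟨i, -, rfl⟩ := mem_image.1 hpF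
    exact ⟨_, mem_attachment_of_mem_attachBlock i (by simp [attachBlock]),
      (hβ.2.1 i (a, z, c i) (by simp [attachBlock])).symm⟩
  · exact ⟨p, mem_union_left _ (mem_sdiff.2 ⟨hp, hpF⟩), (hβ.1 p (mem_sdiff.2 ⟨hp, hpF⟩)).symm⟩

namespace IsAttachable

lemma ne_of_mem_vertexSet (h : IsAttachable G a b c x y z) {v : V} (hv : v ∈ vertexSet G) :
    v ≠ x ∧ x ≠ v ∧ v ≠ y ∧ y ≠ v ∧ v ≠ z ∧ z ≠ v := by
  refine ⟨?_, ?_, ?_, ?_, ?_, ?_⟩ <;> rintro rfl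
  exacts [h.x_notMem hv, h.x_notMem hv, h.y_notMem hv, h.y_notMem hv, h.z_notMem hv,
    h.z_notMem hv]

lemma a_mem (h : IsAttachable G a b c x y z) (i : Fin d) : a ∈ vertexSet G :=
  subset_vertexSet (h.mem i) (by simp [tripleSet])

lemma b_mem (h : IsAttachable G a b c x y z) (i : Fin d) : b i ∈ vertexSet G :=
  subset_vertexSet (h.mem i) (by simp [tripleSet])

lemma c_mem (h : IsAttachable G a b c x y z) (i : Fin d) : c i ∈ vertexSet G :=
  subset_vertexSet (h.mem i) (by simp [tripleSet])

/-- Every inequality in both orientations, so that `simp` can decide all equalities of labels. -/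
lemma distinct [Nonempty (Fin d)] (h : IsAttachable G a b c x y z) :
    (x ≠ y ∧ y ≠ x ∧ x ≠ z ∧ z ≠ x ∧ y ≠ z ∧ z ≠ y) ∧
    (a ≠ x ∧ x ≠ a ∧ a ≠ y ∧ y ≠ a ∧ a ≠ z ∧ z ≠ a) ∧
    (∀ i, b i ≠ x ∧ x ≠ b i ∧ b i ≠ y ∧ y ≠ b i ∧ b i ≠ z ∧ z ≠ b i) ∧
    (∀ i, c i ≠ x ∧ x ≠ c i ∧ c i ≠ y ∧ y ≠ c i ∧ c i ≠ z ∧ z ≠ c i) ∧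
    (∀ i, b i ≠ a ∧ a ≠ b i ∧ c i ≠ a ∧ a ≠ c i) ∧
    (∀ i j, b i ≠ c j ∧ c j ≠ b i) ∧
    (∀ i j, b i = b j ↔ i = j) ∧ (∀ i j, c i = c j ↔ i = j) :=
  ⟨⟨h.x_ne_y, h.x_ne_y.symm, h.x_ne_z, h.x_ne_z.symm, h.y_ne_z, h.y_ne_z.symm⟩,
    h.ne_of_mem_vertexSet (h.a_mem (Classical.arbitrary _)),
    fun i => h.ne_of_mem_vertexSet (h.b_mem i), fun i => h.ne_of_mem_vertexSet (h.c_mem i),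
    fun i => ⟨h.b_ne_a i, (h.b_ne_a i).symm, h.c_ne_a i, (h.c_ne_a i).symm⟩,
    fun i j => ⟨h.b_ne_c i j, (h.b_ne_c i j).symm⟩,
    fun _ _ => h.injective_b.eq_iff, fun _ _ => h.injective_c.eq_iff⟩

lemma image_subset (h : IsAttachable G a b c x y z) :
    univ.image (fun i => (a, b i, c i)) ⊆ G := by
  simpa [subset_iff] using h.mem

lemma injective_star (h : IsAttachable G a b c x y z) :
    Function.Injective fun i => (a, b i, c i) :=
  fun _ _ hij => h.injective_b (congrArg (·.2.1) hij)

lemma pairwiseDisjoint_attachBlock [Nonempty (Fin d)] (h : IsAttachable G a b c x y z) :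
    ((univ : Finset (Fin d)) : Set (Fin d)).PairwiseDisjoint
      fun i => attachBlock a (b i) (c i) x y z := by
  intro i _ j _ hij
  simp only [Function.onFun, attachBlock, disjoint_left]
  simp [h.distinct, hij]

lemma disjoint_attachBase_attachBlock [Nonempty (Fin d)] (h : IsAttachable G a b c x y z)
    (i : Fin d) : Disjoint (attachBase a x y z) (attachBlock a (b i) (c i) x y z) := by
  simp [attachBase, attachBlock, disjoint_left, h.distinct]

lemma notMem_of_mem_new (h : IsAttachable G a b c x y z) {p : V × V × V}
    (hp : p ∈ attachBase a x y z ∪ univ.biUnion fun i => attachBlock a (b i) (c i) x y z) :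
    p ∉ G := fun hG => by
  have hnew : x ∈ tripleSet p ∨ y ∈ tripleSet p ∨ z ∈ tripleSet p := by
    simp only [attachBase, attachBlock, mem_union, mem_biUnion, mem_insert, mem_singleton,
      mem_univ, true_and] at hp
    rcases hp with (rfl | rfl | rfl) | ⟨i, rfl | rfl | rfl | rfl | rfl | rfl | rfl⟩ <;>
      simp [tripleSet]
  rcases hnew with hv | hv | hv
  exacts [h.x_notMem (subset_vertexSet hG hv), h.y_notMem (subset_vertexSet hG hv),
    h.z_notMem (subset_vertexSet hG hv)]

lemma sum_attachment [Nonempty (Fin d)] (h : IsAttachable G a b c x y z) {M : Type*}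
    [AddCommMonoid M] (f : V × V × V → M) :
    ∑ p ∈ attachment G a b c x y z, f p =
      ∑ p ∈ G \ univ.image (fun i => (a, b i, c i)), f p + ∑ p ∈ attachBase a x y z, f p +
        ∑ i, ∑ p ∈ attachBlock a (b i) (c i) x y z, f p := by
  rw [attachment, sum_union, sum_union, sum_biUnion h.pairwiseDisjoint_attachBlock, add_assoc]
  · exact (disjoint_biUnion_right _ _ _).2 fun i _ => h.disjoint_attachBase_attachBlock i
  · exact disjoint_left.2 fun p hp hp' => h.notMem_of_mem_new hp' (mem_sdiff.1 hp).1

lemma sum_attachBlock [Nonempty (Fin d)] (h : IsAttachable G a b c x y z) (i : Fin d)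
    {M : Type*} [AddCommMonoid M] (f : V × V × V → M) :
    ∑ p ∈ attachBlock a (b i) (c i) x y z, f p = f (a, z, c i) + f (c i, z, x) + f (c i, x, y) +
      f (b i, c i, y) + f (b i, y, z) + f (b i, z, x) + f (a, b i, x) := by
  simp [attachBlock, sum_insert, h.distinct, add_assoc]

lemma sum_attachBase [Nonempty (Fin d)] (h : IsAttachable G a b c x y z)
    {M : Type*} [AddCommMonoid M] (f : V × V × V → M) :
    ∑ p ∈ attachBase a x y z, f p = f (x, y, a) + f (a, y, z) + f (x, z, y) := by
  simp [attachBase, sum_insert, h.distinct, add_assoc]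

lemma sum_smul_cVec_of_isLiftedWeight [Nonempty (Fin d)] (h : IsAttachable G a b c x y z)
    {β γ : V × V × V → ℝ} (hβ : IsLiftedWeight G a b c x y z β γ) :
    ∑ p ∈ attachment G a b c x y z, β p • cVec p = ∑ p ∈ G, γ p • cVec p := by
  obtain ⟨hold, hblock, hxya, hayz, hxzy⟩ := hβ
  have hblock_sum : ∀ i, ∑ p ∈ attachBlock a (b i) (c i) x y z, β p • cVec p +
      γ (a, b i, c i) • (cVec (x, y, a) + cVec (a, y, z) + (2 : ℝ) • cVec (x, z, y)) =
      γ (a, b i, c i) • cVec (a, b i, c i) := fun i => by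
    rw [sum_congr rfl fun p hp => by rw [hblock i p hp], ← smul_sum, ← smul_add,
      h.sum_attachBlock, cVec_attachBlock_add_attachBase]
  rw [h.sum_attachment, h.sum_attachBase, sum_congr rfl fun p hp => by rw [hold p hp], hxya,
    hayz, hxzy, ← sum_sdiff h.image_subset, sum_image fun i _ j _ hij => h.injective_star hij,
    ← sum_congr rfl fun i _ => hblock_sum i, sum_add_distrib, ← sum_smul, mul_comm (2 : ℝ),
    mul_smul, smul_add, smul_add]
  abel

lemma exists_isLiftedWeight [Nonempty (Fin d)] (h : IsAttachable G a b c x y z)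
    (γ : V × V × V → ℝ) : ∃ β, IsLiftedWeight G a b c x y z β γ := by
  have hbase : ∀ p ∈ attachBase a x y z, p ∉ G ∧ ¬∃ i, p ∈ attachBlock a (b i) (c i) x y z :=
    fun p hp => ⟨h.notMem_of_mem_new (mem_union_left _ hp),
      fun ⟨i, hi⟩ => disjoint_left.1 (h.disjoint_attachBase_attachBlock i) hp hi⟩
  refine ⟨fun p => if p ∈ G then γ p
    else if hp : ∃ i, p ∈ attachBlock a (b i) (c i) x y z then γ (a, b hp.choose, c hp.choose)
    else if p = (x, z, y) then 2 * ∑ i, γ (a, b i, c i) else ∑ i, γ (a, b i, c i),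
    fun p hp => if_pos (mem_sdiff.1 hp).1, fun i p hp => ?_, ?_, ?_, ?_⟩
  · have hpG := h.notMem_of_mem_new (mem_union_right _ (mem_biUnion.2 ⟨i, mem_univ i, hp⟩))
    have hex : ∃ i, p ∈ attachBlock a (b i) (c i) x y z := ⟨i, hp⟩
    have hi : hex.choose = i := h.pairwiseDisjoint_attachBlock.elim_finset (mem_univ _)
      (mem_univ _) p hex.choose_spec hp
    simp only [hpG, hex, if_false, dif_pos, hi]
  · simp [hbase (x, y, a) (by simp [attachBase]), h.distinct]
  · simp [hbase (a, y, z) (by simp [attachBase]), h.distinct]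
  · simp [hbase (x, z, y) (by simp [attachBase])]

/-- Only base and block triples contain a new vertex, so only they contribute to a weighted
incidence sum at a pair `(u, w)` with `w` new. -/
lemma sum_attachBase_add_sum_attachBlock_apply_eq_zero [Nonempty (Fin d)]
    (h : IsAttachable G a b c x y z) {β : V × V × V → ℝ}
    (hβ : ∑ p ∈ attachment G a b c x y z, β p • cVec p = 0) (u w : V)
    (hw : w = x ∨ w = y ∨ w = z) :
    ∑ p ∈ attachBase a x y z, β p * cVec p u w +
      ∑ i, ∑ p ∈ attachBlock a (b i) (c i) x y z, β p * cVec p u w = 0 := by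
  have hold : ∑ p ∈ G \ univ.image (fun i => (a, b i, c i)), β p * cVec p u w = 0 := by
    refine sum_eq_zero fun p hp => ?_
    rw [cVec_apply_eq_zero_of_notMem (fun hwp => ?_), mul_zero]
    have := h.ne_of_mem_vertexSet (subset_vertexSet (mem_sdiff.1 hp).1 hwp)
    tauto
  have := congr_fun₂ hβ u w
  simp only [Finset.sum_apply, Pi.smul_apply, smul_eq_mul, Pi.zero_apply] at this
  rwa [h.sum_attachment, hold, zero_add] at this

lemma weight_attachBlock_of_sum_eq_zero [Nonempty (Fin d)] (h : IsAttachable G a b c x y z)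
    {β : V × V × V → ℝ} (hβ : ∑ p ∈ attachment G a b c x y z, β p • cVec p = 0) (i : Fin d) :
    ∀ p ∈ attachBlock a (b i) (c i) x y z, β p = β (b i, c i, y) := by
  have key := h.sum_attachBase_add_sum_attachBlock_apply_eq_zero hβ
  have hne := h.distinct
  -- Each pair `(u, w)` used below lies in exactly two triples, with opposite orientations.
  have hcz : β (a, z, c i) = β (c i, z, x) := by
    simpa [h.sum_attachBlock, h.sum_attachBase, cVec, incVec, edgeVec, hne, sum_add_distrib,
      neg_add_eq_zero] using key (c i) z (by simp)
  have hcx : β (c i, z, x) = β (c i, x, y) := by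
    simpa [h.sum_attachBlock, h.sum_attachBase, cVec, incVec, edgeVec, hne, sum_add_distrib,
      neg_add_eq_zero] using key (c i) x (by simp)
  have hcy : β (c i, x, y) = β (b i, c i, y) := by
    simpa [h.sum_attachBlock, h.sum_attachBase, cVec, incVec, edgeVec, hne, sum_add_distrib,
      neg_add_eq_zero] using key (c i) y (by simp)
  have hby : β (b i, c i, y) = β (b i, y, z) := by
    simpa [h.sum_attachBlock, h.sum_attachBase, cVec, incVec, edgeVec, hne, sum_add_distrib,
      neg_add_eq_zero] using key (b i) y (by simp)
  have hbz : β (b i, y, z) = β (b i, z, x) := by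
    simpa [h.sum_attachBlock, h.sum_attachBase, cVec, incVec, edgeVec, hne, sum_add_distrib,
      neg_add_eq_zero] using key (b i) z (by simp)
  have hbx : β (b i, z, x) = β (a, b i, x) := by
    simpa [h.sum_attachBlock, h.sum_attachBase, cVec, incVec, edgeVec, hne, sum_add_distrib,
      neg_add_eq_zero] using key (b i) x (by simp)
  intro p hp
  simp only [attachBlock, mem_insert, mem_singleton] at hp
  rcases hp with rfl | rfl | rfl | rfl | rfl | rfl | rfl <;> linarith

lemma weight_attachBase_of_sum_eq_zero [Nonempty (Fin d)] (h : IsAttachable G a b c x y z)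
    {β : V × V × V → ℝ} (hβ : ∑ p ∈ attachment G a b c x y z, β p • cVec p = 0) :
    β (x, y, a) = ∑ i, β (b i, c i, y) ∧ β (a, y, z) = ∑ i, β (b i, c i, y) ∧
      β (x, z, y) = 2 * ∑ i, β (b i, c i, y) := by
  have key := h.sum_attachBase_add_sum_attachBlock_apply_eq_zero hβ
  have hne := h.distinct
  have hblock := fun i p (hp : p ∈ attachBlock a (b i) (c i) x y z) =>
    h.weight_attachBlock_of_sum_eq_zero hβ i p hp
  simp only [attachBlock, mem_insert, mem_singleton, forall_eq_or_imp, forall_eq] at hblock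
  have hax : β (x, y, a) = ∑ i, β (a, b i, x) := by
    simpa [h.sum_attachBlock, h.sum_attachBase, cVec, incVec, edgeVec, hne, add_neg_eq_zero]
      using key a x (by simp)
  have haz : β (a, y, z) = ∑ i, β (a, z, c i) := by
    simpa [h.sum_attachBlock, h.sum_attachBase, cVec, incVec, edgeVec, hne, neg_add_eq_zero]
      using key a z (by simp)
  have hxz : β (x, z, y) = ∑ i, β (b i, z, x) + ∑ i, β (c i, z, x) := by
    simpa [h.sum_attachBlock, h.sum_attachBase, cVec, incVec, edgeVec, hne, sum_add_distrib,
      add_eq_zero_iff_eq_neg] using key x z (by simp)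
  refine ⟨?_, ?_, ?_⟩
  · simp only [hax, fun i => (hblock i).2.2.2.2.2.2]
  · simp only [haz, fun i => (hblock i).1]
  · simp only [hxz, fun i => (hblock i).2.2.2.2.2.1, fun i => (hblock i).2.1, two_mul]

lemma exists_isLiftedWeight_of_sum_eq_zero [Nonempty (Fin d)] (h : IsAttachable G a b c x y z)
    {β : V × V × V → ℝ} (hβ : ∑ p ∈ attachment G a b c x y z, β p • cVec p = 0) :
    ∃ γ, IsLiftedWeight G a b c x y z β γ := by
  refine ⟨fun p => if p ∈ univ.image (fun i => (a, b i, c i)) then β (p.2.1, p.2.2, y) else β p,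
    fun p hp => (if_neg (mem_sdiff.1 hp).2).symm, ?_⟩
  have hF : ∀ i, (if (a, b i, c i) ∈ univ.image (fun j => (a, b j, c j))
      then β (b i, c i, y) else β (a, b i, c i)) = β (b i, c i, y) := fun i =>
    if_pos (mem_image_of_mem _ (mem_univ i))
  simp only [hF]
  exact ⟨h.weight_attachBlock_of_sum_eq_zero hβ, h.weight_attachBase_of_sum_eq_zero hβ⟩

lemma eq_weight_or_eq_sum_of_isLiftedWeight (h : IsAttachable G a b c x y z) {β γ : V × V × V → ℝ}
    (hβ : IsLiftedWeight G a b c x y z β γ) {p : V × V × V}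
    (hp : p ∈ attachment G a b c x y z) : (∃ q ∈ G, β p = γ q) ∨
      β p = ∑ i, γ (a, b i, c i) ∨ β p = 2 * ∑ i, γ (a, b i, c i) := by
  obtain ⟨hold, hblock, hxya, hayz, hxzy⟩ := hβ
  simp only [attachment, attachBase, mem_union, mem_insert, mem_singleton, mem_biUnion,
    mem_univ, true_and] at hp
  rcases hp with hp | (rfl | rfl | rfl) | ⟨i, hp⟩
  · exact .inl ⟨p, (mem_sdiff.1 hp).1, hold p hp⟩
  · exact .inr (.inl hxya)
  · exact .inr (.inl hayz)
  · exact .inr (.inr hxzy)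
  · exact .inl ⟨_, h.mem i, hblock i p hp⟩

lemma eq_zero_of_isLiftedWeight (h : IsAttachable G a b c x y z) {β γ : V × V × V → ℝ}
    (hβ : IsLiftedWeight G a b c x y z β γ) (hγ : ∀ p ∈ G, γ p = 0) :
    ∀ p ∈ attachment G a b c x y z, β p = 0 := by
  have hT : ∑ i, γ (a, b i, c i) = 0 := sum_eq_zero fun i _ => hγ _ (h.mem i)
  intro p hp
  rcases h.eq_weight_or_eq_sum_of_isLiftedWeight hβ hp with ⟨q, hq, e⟩ | e | e
  · rw [e, hγ q hq]
  · rw [e, hT]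
  · rw [e, hT, mul_zero]

lemma pos_of_isLiftedWeight [Nonempty (Fin d)] (h : IsAttachable G a b c x y z)
    {β γ : V × V × V → ℝ} (hβ : IsLiftedWeight G a b c x y z β γ) (hγ : ∀ p ∈ G, 0 < γ p) :
    ∀ p ∈ attachment G a b c x y z, 0 < β p := by
  have hT : 0 < ∑ i, γ (a, b i, c i) := sum_pos (fun i _ => hγ _ (h.mem i)) univ_nonempty
  intro p hp
  rcases h.eq_weight_or_eq_sum_of_isLiftedWeight hβ hp with ⟨q, hq, e⟩ | e | e
  · exact e ▸ hγ q hq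
  · exact e ▸ hT
  · rw [e]
    positivity

theorem isSingleCycle_attachment [Nonempty (Fin d)] (h : IsAttachable G a b c x y z)
    (hG : IsSingleCycle G) : IsSingleCycle (attachment G a b c x y z) := by
  rw [isSingleCycle_iff] at hG ⊢
  obtain ⟨⟨-, -, α, hαpos, hαsum⟩, hdich⟩ := hG
  obtain ⟨β, hβ⟩ := h.exists_isLiftedWeight α
  refine ⟨⟨⟨(x, z, y), mem_attachment_of_mem_attachBase (by simp [attachBase])⟩, subset_rfl, β,
    h.pos_of_isLiftedWeight hβ hαpos, (h.sum_smul_cVec_of_isLiftedWeight hβ).trans hαsum⟩,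
    fun β' hβ' hsum => ?_⟩
  obtain ⟨γ, hγ⟩ := h.exists_isLiftedWeight_of_sum_eq_zero hsum
  have hγnonneg : ∀ p ∈ G, 0 ≤ γ p := fun p hp => by
    obtain ⟨q, hq, e⟩ := hγ.exists_mem_attachment_eq hp
    exact e ▸ hβ' q hq
  rcases hdich γ hγnonneg ((h.sum_smul_cVec_of_isLiftedWeight hγ).symm.trans hsum) with h0 | hpos
  exacts [.inl (h.eq_zero_of_isLiftedWeight hγ h0), .inr (h.pos_of_isLiftedWeight hγ hpos)]

lemma card_attachment [Nonempty (Fin d)] (h : IsAttachable G a b c x y z) :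
    (attachment G a b c x y z).card = G.card + 6 * d + 3 := by
  have hF : (univ.image fun i => (a, b i, c i)).card = d := by
    rw [card_image_of_injective _ h.injective_star, card_univ, Fintype.card_fin]
  have hdG : d ≤ G.card := hF ▸ card_le_card h.image_subset
  rw [card_eq_sum_ones, h.sum_attachment, ← card_eq_sum_ones, card_sdiff_of_subset h.image_subset,
    hF, h.sum_attachBase]
  simp only [h.sum_attachBlock, sum_const, card_univ, Fintype.card_fin, smul_eq_mul]
  omega

lemma vertexSet_attachment [Nonempty (Fin d)] (h : IsAttachable G a b c x y z) :
    vertexSet (attachment G a b c x y z) = vertexSet G ∪ {x, y, z} := by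
  have hxzy : (x, z, y) ∈ attachment G a b c x y z :=
    mem_attachment_of_mem_attachBase (by simp [attachBase])
  have hxya : (x, y, a) ∈ attachment G a b c x y z :=
    mem_attachment_of_mem_attachBase (by simp [attachBase])
  refine subset_antisymm (fun v hv => ?_) (union_subset (biUnion_subset.2 fun p hp => ?_) ?_)
  · obtain ⟨p, hp, hv⟩ := mem_biUnion.1 hv
    simp only [attachment, attachBase, attachBlock, mem_union, mem_insert, mem_singleton,
      mem_biUnion, mem_univ, true_and] at hp
    rcases hp with hp | (rfl | rfl | rfl) | ⟨i, rfl | rfl | rfl | rfl | rfl | rfl | rfl⟩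
    · exact mem_union_left _ (subset_vertexSet (mem_sdiff.1 hp).1 hv)
    all_goals
      simp only [tripleSet, mem_insert, mem_singleton] at hv
      rcases hv with rfl | rfl | rfl <;>
        simp [h.a_mem (Classical.arbitrary _), h.b_mem, h.c_mem]
  · by_cases hpF : p ∈ univ.image (fun i => (a, b i, c i))
    · obtain ⟨i, -, rfl⟩ := mem_image.1 hpF
      have hbcy : (b i, c i, y) ∈ attachment G a b c x y z :=
        mem_attachment_of_mem_attachBlock i (by simp [attachBlock])
      intro v hv
      simp only [tripleSet, mem_insert, mem_singleton] at hv
      rcases hv with rfl | rfl | rfl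
      exacts [subset_vertexSet hxya (by simp [tripleSet]),
        subset_vertexSet hbcy (by simp [tripleSet]), subset_vertexSet hbcy (by simp [tripleSet])]
    · exact subset_vertexSet (mem_union_left _ (mem_sdiff.2 ⟨hp, hpF⟩))
  · exact (by simp [tripleSet, insert_subset_iff] : {x, y, z} ⊆ tripleSet (x, z, y)).trans
      (subset_vertexSet hxzy)

lemma card_vertexSet_attachment [Nonempty (Fin d)] (h : IsAttachable G a b c x y z) :
    (vertexSet (attachment G a b c x y z)).card = (vertexSet G).card + 3 := by
  rw [h.vertexSet_attachment, card_union_of_disjoint,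
    card_insert_of_notMem (by simp [h.x_ne_y, h.x_ne_z]), card_pair h.y_ne_z]
  refine disjoint_left.2 fun v hv => ?_
  have := h.ne_of_mem_vertexSet hv
  simp only [mem_insert, mem_singleton]
  tauto

lemma card_star [Nonempty (Fin d)] (h : IsAttachable G a b c x y z) :
    (insert (x, z, y) (univ.image fun i => (b i, c i, y))).card = d + 1 := by
  rw [card_insert_of_notMem, card_image_of_injective _ fun i j hij => h.injective_b
    (congrArg (·.1) hij), card_univ, Fintype.card_fin]
  simp [h.distinct]

lemma isStarSystem_star [Nonempty (Fin d)] (h : IsAttachable G a b c x y z) :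
    IsStarSystem (insert (x, z, y) (univ.image fun i => (b i, c i, y))) := by
  obtain ⟨⟨hxy, hyx, hxz, hzx, hyz, hzy⟩, -, hb, hc, -, hbc, hbb, hcc⟩ := h.distinct
  refine ⟨y, ?_⟩
  simp only [mem_insert, mem_image, mem_univ, true_and]
  rintro _ (rfl | ⟨i, rfl⟩) _ (rfl | ⟨j, rfl⟩) hpq <;> ext w <;>
    simp only [tripleSet, mem_inter, mem_insert, mem_singleton]
  · exact absurd rfl hpq
  · grind
  · grind
  · have : i ≠ j := fun e => hpq (e ▸ rfl)
    grind

end IsAttachable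

end

theorem P_attachment_star_system_general {V : Type*} [DecidableEq V]
    (G : Finset (V × V × V)) (hG : IsSingleCycle G)
    (k l d : ℕ) (hd : 1 ≤ d) (hk : (vertexSet G).card = k) (hl : G.card = l)
    (a : V) (b c : Fin d → V)
    (hb : Function.Injective b) (hc : Function.Injective c)
    (hbc : ∀ i j, b i ≠ c j) (hba : ∀ i, b i ≠ a) (hca : ∀ i, c i ≠ a)
    (hmem : ∀ i, (a, b i, c i) ∈ G)
    (x y z : V) (hxy : x ≠ y) (hxz : x ≠ z) (hyz : y ≠ z)
    (hx : x ∉ vertexSet G) (hy : y ∉ vertexSet G) (hz : z ∉ vertexSet G)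
    (G' : Finset (V × V × V))
    (hG' : G' = (G \ Finset.image (fun i => (a, b i, c i)) Finset.univ) ∪
      (({(x, y, a), (a, y, z), (x, z, y)} : Finset (V × V × V)) ∪
        Finset.univ.biUnion (fun i : Fin d =>
          ({(a, z, c i), (c i, z, x), (c i, x, y), (b i, c i, y),
            (b i, y, z), (b i, z, x), (a, b i, x)} : Finset (V × V × V))))) :
    IsSingleCycle G' ∧ (vertexSet G').card = k + 3 ∧ G'.card = l + 6 * d + 3 ∧
      ∃ S : Finset (V × V × V),
        S = insert (x, z, y) (Finset.image (fun i => (b i, c i, y)) Finset.univ) ∧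
        S ⊆ G' ∧ S.card = d + 1 ∧ IsStarSystem S := by
  have : Nonempty (Fin d) := ⟨⟨0, hd⟩⟩
  have h : IsAttachable G a b c x y z := ⟨hb, hc, hbc, hba, hca, hmem, hxy, hxz, hyz, hx, hy, hz⟩
  obtain rfl : G' = attachment G a b c x y z := hG'
  exact ⟨h.isSingleCycle_attachment hG, hk ▸ h.card_vertexSet_attachment,
    hl ▸ h.card_attachment, _, rfl, star_subset_attachment, h.card_star, h.isStarSystem_star⟩

/-- **Lemma (P-attachment).**  Let `G` be a single cycle on `k` vertices of length `l`
containing a star system `{→a b_i c_i : i = 1,…,d}` with all `b_i` distinct from all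
`c_j`.  Then the `(P, F)`-attachment on `G` (with three new vertices `x, y, z`) is a
single cycle on `k + 3` vertices of length `l + 6d + 3`, and it contains the star system
`{→y b_i c_i : i = 1,…,d} ∪ {→yxz}` of size `d + 1`. -/
theorem P_attachment_star_system {V : Type*} [DecidableEq V]
    (G : Finset (V × V × V)) (hWF : WellFormed G) (hG : IsSingleCycle G)
    (k l d : ℕ) (hd : 1 ≤ d) (hk : (vertexSet G).card = k) (hl : G.card = l)
    (a : V) (b c : Fin d → V)
    (hb : Function.Injective b) (hc : Function.Injective c)
    (hbc : ∀ i j, b i ≠ c j) (hba : ∀ i, b i ≠ a) (hca : ∀ i, c i ≠ a)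
    (hmem : ∀ i, (a, b i, c i) ∈ G)
    (x y z : V) (hxy : x ≠ y) (hxz : x ≠ z) (hyz : y ≠ z)
    (hx : x ∉ vertexSet G) (hy : y ∉ vertexSet G) (hz : z ∉ vertexSet G)
    (G' : Finset (V × V × V))
    (hG' : G' = (G \ Finset.image (fun i => (a, b i, c i)) Finset.univ) ∪
      (({(x, y, a), (a, y, z), (x, z, y)} : Finset (V × V × V)) ∪
        Finset.univ.biUnion (fun i : Fin d =>
          ({(a, z, c i), (c i, z, x), (c i, x, y), (b i, c i, y),
            (b i, y, z), (b i, z, x), (a, b i, x)} : Finset (V × V × V))))) :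
    IsSingleCycle G' ∧ (vertexSet G').card = k + 3 ∧ G'.card = l + 6 * d + 3 ∧
      ∃ S : Finset (V × V × V),
        S = insert (x, z, y) (Finset.image (fun i => (b i, c i, y)) Finset.univ) ∧
        S ⊆ G' ∧ S.card = d + 1 ∧ IsStarSystem S :=
  P_attachment_star_system_general G hG k l d hd hk hl a b c hb hc hbc hba hca hmem x y z hxy hxz
    hyz hx hy hz G' hG'
end

section
/- Let G be a single cycle on k vertices of length l containing a star system F = {→ab_ic_i : i = 1,…,d} with b_i ≠ c_j for all i, j. Then the (S,F)-attachment on G is a single cycle on k + 4 vertices of length l + 8d + 5, and it contains a star system of size d + 2. -/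
set_option maxHeartbeats 1000000

section aux
variable {V : Type*} [DecidableEq V]

lemma cVec_zero_left {p : V × V × V} {u : V} (h : u ∉ tripleSet p) (v : V) :
    cVec p u v = 0 := by
  obtain ⟨p1, p2, p3⟩ := p
  simp only [tripleSet, Finset.mem_insert, Finset.mem_singleton, not_or] at h
  simp [cVec, incVec, edgeVec, h.1, h.2.1, h.2.2]

lemma cVec_zero_right {p : V × V × V} {v : V} (h : v ∉ tripleSet p) (u : V) :
    cVec p u v = 0 := by
  obtain ⟨p1, p2, p3⟩ := p
  simp only [tripleSet, Finset.mem_insert, Finset.mem_singleton, not_or] at h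
  simp [cVec, incVec, edgeVec, h.1, h.2.1, h.2.2]

lemma tripleSet_subset {G : Finset (V × V × V)} {p : V × V × V} (h : p ∈ G) :
    tripleSet p ⊆ vertexSet G := fun w hw => Finset.mem_biUnion.2 ⟨p, h, hw⟩

lemma keyIdentity (a b c x y z t : V) :
    cVec (x,y,t) + cVec (a,t,y) + cVec (a,y,z) + cVec (a,z,t) + (2:ℝ) • cVec (x,z,y)
      + cVec (a,t,c) + cVec (c,t,z) + cVec (c,z,x) + cVec (c,x,y) + cVec (c,y,b)
      + cVec (b,y,z) + cVec (b,z,x) + cVec (t,b,x) + cVec (b,t,a) = cVec (a,b,c) := by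
  funext i j
  simp only [cVec, incVec, edgeVec, Pi.add_apply, Pi.smul_apply, smul_eq_mul]
  ring

lemma sum5 {M : Type*} [AddCommMonoid M] {α : Type*} [DecidableEq α]
    (f : α → M) (a1 a2 a3 a4 a5 : α)
    (h1 : a1 ∉ ({a2,a3,a4,a5} : Finset α)) (h2 : a2 ∉ ({a3,a4,a5} : Finset α))
    (h3 : a3 ∉ ({a4,a5} : Finset α)) (h4 : a4 ∉ ({a5} : Finset α)) :
    ∑ p ∈ ({a1,a2,a3,a4,a5} : Finset α), f p = f a1 + f a2 + f a3 + f a4 + f a5 := by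
  rw [Finset.sum_insert h1, Finset.sum_insert h2, Finset.sum_insert h3,
    Finset.sum_insert h4, Finset.sum_singleton]
  abel

lemma sum9 {M : Type*} [AddCommMonoid M] {α : Type*} [DecidableEq α]
    (f : α → M) (a1 a2 a3 a4 a5 a6 a7 a8 a9 : α)
    (h1 : a1 ∉ ({a2,a3,a4,a5,a6,a7,a8,a9} : Finset α))
    (h2 : a2 ∉ ({a3,a4,a5,a6,a7,a8,a9} : Finset α))
    (h3 : a3 ∉ ({a4,a5,a6,a7,a8,a9} : Finset α))
    (h4 : a4 ∉ ({a5,a6,a7,a8,a9} : Finset α))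
    (h5 : a5 ∉ ({a6,a7,a8,a9} : Finset α))
    (h6 : a6 ∉ ({a7,a8,a9} : Finset α))
    (h7 : a7 ∉ ({a8,a9} : Finset α))
    (h8 : a8 ∉ ({a9} : Finset α)) :
    ∑ p ∈ ({a1,a2,a3,a4,a5,a6,a7,a8,a9} : Finset α), f p
      = f a1 + f a2 + f a3 + f a4 + f a5 + f a6 + f a7 + f a8 + f a9 := by
  rw [Finset.sum_insert h1, Finset.sum_insert h2, Finset.sum_insert h3,
    Finset.sum_insert h4, Finset.sum_insert h5, Finset.sum_insert h6,
    Finset.sum_insert h7, Finset.sum_insert h8, Finset.sum_singleton]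
  abel

lemma sum_apply₂ {s : Finset (V × V × V)} {w : V × V × V → ℝ}
    (h : ∑ p ∈ s, w p • cVec p = 0) (u v : V) :
    ∑ p ∈ s, w p * cVec p u v = 0 := by
  have := congrFun (congrFun h u) v
  simpa [Finset.sum_apply] using this

end aux

/-- **Lemma (S-attachment).**  Let `G` be a single cycle on `k` vertices of length `l`
containing a star system `{→a b_i c_i : i = 1,…,d}` with `b_i ≠ c_j` for all `i, j`.  Then
the `(S, F)`-attachment on `G` (with four new vertices `x, y, z, t`) is a single cycle on
`k + 4` vertices of length `l + 8d + 5`, and it contains a star system of size `d + 2`. -/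
theorem S_attachment_star_system {V : Type*} [DecidableEq V]
    (G : Finset (V × V × V)) (hWF : WellFormed G) (hG : IsSingleCycle G)
    (k l d : ℕ) (hd : 1 ≤ d) (hk : (vertexSet G).card = k) (hl : G.card = l)
    (a : V) (b c : Fin d → V)
    (hb : Function.Injective b) (hc : Function.Injective c)
    (hbc : ∀ i j, b i ≠ c j) (hba : ∀ i, b i ≠ a) (hca : ∀ i, c i ≠ a)
    (hmem : ∀ i, (a, b i, c i) ∈ G)
    (x y z t : V) (hxy : x ≠ y) (hxz : x ≠ z) (hxt : x ≠ t) (hyz : y ≠ z)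
    (hyt : y ≠ t) (hzt : z ≠ t)
    (hx : x ∉ vertexSet G) (hy : y ∉ vertexSet G) (hz : z ∉ vertexSet G)
    (ht : t ∉ vertexSet G)
    (G' : Finset (V × V × V))
    (hG' : G' = (G \ Finset.image (fun i => (a, b i, c i)) Finset.univ) ∪
      (({(x, y, t), (a, t, y), (a, y, z), (a, z, t), (x, z, y)} : Finset (V × V × V)) ∪
        Finset.univ.biUnion (fun i : Fin d =>
          ({(a, t, c i), (c i, t, z), (c i, z, x), (c i, x, y), (c i, y, b i),
            (b i, y, z), (b i, z, x), (t, b i, x), (b i, t, a)} : Finset (V × V × V))))) :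
    IsSingleCycle G' ∧ (vertexSet G').card = k + 4 ∧ G'.card = l + 8 * d + 5 ∧
      ∃ S : Finset (V × V × V), S ⊆ G' ∧ S.card = d + 2 ∧ IsStarSystem S := by
  classical
  -- abbreviations
  set F : Finset (V × V × V) := Finset.image (fun i => (a, b i, c i)) Finset.univ with hFdef
  set five : Finset (V × V × V) := {(x, y, t), (a, t, y), (a, y, z), (a, z, t), (x, z, y)}
    with hfivedef
  set blk : Fin d → Finset (V × V × V) := fun i =>
    {(a, t, c i), (c i, t, z), (c i, z, x), (c i, x, y), (c i, y, b i),
      (b i, y, z), (b i, z, x), (t, b i, x), (b i, t, a)} with hblkdef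
  have i₀ : Fin d := ⟨0, hd⟩
  -- vertex membership facts
  have hav : a ∈ vertexSet G := tripleSet_subset (hmem i₀) (by simp [tripleSet])
  have hbv : ∀ i, b i ∈ vertexSet G := fun i =>
    tripleSet_subset (hmem i) (by simp [tripleSet])
  have hcv : ∀ i, c i ∈ vertexSet G := fun i =>
    tripleSet_subset (hmem i) (by simp [tripleSet])
  -- inequality facts
  have hyx : y ≠ x := hxy.symm
  have hzx : z ≠ x := hxz.symm
  have htx : t ≠ x := hxt.symm
  have hzy : z ≠ y := hyz.symm
  have hty : t ≠ y := hyt.symm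
  have htz : t ≠ z := hzt.symm
  have hax : a ≠ x := fun h => hx (h ▸ hav)
  have hay : a ≠ y := fun h => hy (h ▸ hav)
  have haz : a ≠ z := fun h => hz (h ▸ hav)
  have hat : a ≠ t := fun h => ht (h ▸ hav)
  have hxa : x ≠ a := hax.symm
  have hya : y ≠ a := hay.symm
  have hza : z ≠ a := haz.symm
  have hta : t ≠ a := hat.symm
  have hbx : ∀ i, b i ≠ x := fun i h => hx (h ▸ hbv i)
  have hby : ∀ i, b i ≠ y := fun i h => hy (h ▸ hbv i)
  have hbz : ∀ i, b i ≠ z := fun i h => hz (h ▸ hbv i)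
  have hbt : ∀ i, b i ≠ t := fun i h => ht (h ▸ hbv i)
  have hxb : ∀ i, x ≠ b i := fun i => (hbx i).symm
  have hyb : ∀ i, y ≠ b i := fun i => (hby i).symm
  have hzb : ∀ i, z ≠ b i := fun i => (hbz i).symm
  have htb : ∀ i, t ≠ b i := fun i => (hbt i).symm
  have hcx : ∀ i, c i ≠ x := fun i h => hx (h ▸ hcv i)
  have hcy : ∀ i, c i ≠ y := fun i h => hy (h ▸ hcv i)
  have hcz : ∀ i, c i ≠ z := fun i h => hz (h ▸ hcv i)
  have hct : ∀ i, c i ≠ t := fun i h => ht (h ▸ hcv i)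
  have hxc : ∀ i, x ≠ c i := fun i => (hcx i).symm
  have hyc : ∀ i, y ≠ c i := fun i => (hcy i).symm
  have hzc : ∀ i, z ≠ c i := fun i => (hcz i).symm
  have htc : ∀ i, t ≠ c i := fun i => (hct i).symm
  have hab : ∀ i, a ≠ b i := fun i => (hba i).symm
  have hac : ∀ i, a ≠ c i := fun i => (hca i).symm
  have hcb : ∀ i j, c i ≠ b j := fun i j => (hbc j i).symm
  -- structural membership facts
  have hFsub : F ⊆ G := by
    intro p hp
    rw [hFdef] at hp
    obtain ⟨i, -, rfl⟩ := Finset.mem_image.1 hp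
    exact hmem i
  have hFinj : Function.Injective (fun i : Fin d => (a, b i, c i)) := by
    intro i j h
    exact hb (congrArg (fun q => q.2.1) h)
  have hFcard : F.card = d := by
    rw [hFdef, Finset.card_image_of_injective _ hFinj, Finset.card_univ, Fintype.card_fin]
  have hnewG : ∀ p ∈ five ∪ Finset.univ.biUnion blk, p ∉ G := by
    intro p hp hpG
    have hsub := tripleSet_subset hpG
    rcases Finset.mem_union.1 hp with h5 | hB
    · rw [hfivedef] at h5
      simp only [Finset.mem_insert, Finset.mem_singleton] at h5
      rcases h5 with rfl | rfl | rfl | rfl | rfl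
      · exact hx (hsub (by simp [tripleSet]))
      · exact ht (hsub (by simp [tripleSet]))
      · exact hy (hsub (by simp [tripleSet]))
      · exact hz (hsub (by simp [tripleSet]))
      · exact hx (hsub (by simp [tripleSet]))
    · obtain ⟨i, -, hB⟩ := Finset.mem_biUnion.1 hB
      rw [hblkdef] at hB
      simp only [Finset.mem_insert, Finset.mem_singleton] at hB
      rcases hB with rfl | rfl | rfl | rfl | rfl | rfl | rfl | rfl | rfl
      · exact ht (hsub (by simp [tripleSet]))
      · exact ht (hsub (by simp [tripleSet]))
      · exact hz (hsub (by simp [tripleSet]))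
      · exact hx (hsub (by simp [tripleSet]))
      · exact hy (hsub (by simp [tripleSet]))
      · exact hy (hsub (by simp [tripleSet]))
      · exact hz (hsub (by simp [tripleSet]))
      · exact ht (hsub (by simp [tripleSet]))
      · exact ht (hsub (by simp [tripleSet]))
  have hdisj1 : Disjoint (G \ F) (five ∪ Finset.univ.biUnion blk) := by
    rw [Finset.disjoint_left]
    intro p hp hp2
    exact hnewG p hp2 (Finset.mem_sdiff.1 hp).1
  have hdisj2 : Disjoint five (Finset.univ.biUnion blk) := by
    rw [Finset.disjoint_left]
    intro p hp5 hpB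
    obtain ⟨i, -, hB⟩ := Finset.mem_biUnion.1 hpB
    rw [hfivedef] at hp5
    rw [hblkdef] at hB
    simp only [Finset.mem_insert, Finset.mem_singleton] at hp5
    rcases hp5 with rfl | rfl | rfl | rfl | rfl <;>
      simp [Prod.ext_iff, hxy, hxz, hxt, hyz, hyt, hzt, hyx, hzx, htx, hzy, hty, htz, hax, hay, haz, hat, hxa, hya, hza, hta, hbx, hby, hbz, hbt, hxb, hyb, hzb, htb, hcx, hcy, hcz, hct, hxc, hyc, hzc, htc, hab, hba, hac, hca, hbc, hcb] at hB
  have hblkdisj : ∀ i j : Fin d, i ≠ j → Disjoint (blk i) (blk j) := by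
    intro i j hij
    have hcc : c i ≠ c j := fun h => hij (hc h)
    have hcc' : c j ≠ c i := hcc.symm
    have hbb : b i ≠ b j := fun h => hij (hb h)
    have hbb' : b j ≠ b i := hbb.symm
    rw [Finset.disjoint_left]
    intro p hpi hpj
    rw [hblkdef] at hpi hpj
    simp only [Finset.mem_insert, Finset.mem_singleton] at hpi
    rcases hpi with rfl | rfl | rfl | rfl | rfl | rfl | rfl | rfl | rfl <;>
      simp [Prod.ext_iff, hcc, hcc', hbb, hbb', hxy, hxz, hxt, hyz, hyt, hzt, hyx, hzx, htx, hzy, hty, htz, hax, hay, haz, hat, hxa, hya, hza, hta, hbx, hby, hbz, hbt, hxb, hyb, hzb, htb, hcx, hcy, hcz, hct, hxc, hyc, hzc, htc, hab, hba, hac, hca, hbc, hcb] at hpj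
  have hpd : (↑(Finset.univ : Finset (Fin d)) : Set (Fin d)).PairwiseDisjoint blk :=
    fun i _ j _ hij => hblkdisj i j hij
  -- five element distinctness side conditions
  have h5n1 : (x,y,t) ∉ ({(a,t,y),(a,y,z),(a,z,t),(x,z,y)} : Finset (V×V×V)) := by
    simp [Prod.ext_iff, hxy, hxz, hxt, hyz, hyt, hzt, hyx, hzx, htx, hzy, hty, htz, hax, hay, haz, hat, hxa, hya, hza, hta, hbx, hby, hbz, hbt, hxb, hyb, hzb, htb, hcx, hcy, hcz, hct, hxc, hyc, hzc, htc, hab, hba, hac, hca, hbc, hcb]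
  have h5n2 : (a,t,y) ∉ ({(a,y,z),(a,z,t),(x,z,y)} : Finset (V×V×V)) := by
    simp [Prod.ext_iff, hxy, hxz, hxt, hyz, hyt, hzt, hyx, hzx, htx, hzy, hty, htz, hax, hay, haz, hat, hxa, hya, hza, hta, hbx, hby, hbz, hbt, hxb, hyb, hzb, htb, hcx, hcy, hcz, hct, hxc, hyc, hzc, htc, hab, hba, hac, hca, hbc, hcb]
  have h5n3 : (a,y,z) ∉ ({(a,z,t),(x,z,y)} : Finset (V×V×V)) := by
    simp [Prod.ext_iff, hxy, hxz, hxt, hyz, hyt, hzt, hyx, hzx, htx, hzy, hty, htz, hax, hay, haz, hat, hxa, hya, hza, hta, hbx, hby, hbz, hbt, hxb, hyb, hzb, htb, hcx, hcy, hcz, hct, hxc, hyc, hzc, htc, hab, hba, hac, hca, hbc, hcb]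
  have h5n4 : (a,z,t) ∉ ({(x,z,y)} : Finset (V×V×V)) := by
    simp [Prod.ext_iff, hxy, hxz, hxt, hyz, hyt, hzt, hyx, hzx, htx, hzy, hty, htz, hax, hay, haz, hat, hxa, hya, hza, hta, hbx, hby, hbz, hbt, hxb, hyb, hzb, htb, hcx, hcy, hcz, hct, hxc, hyc, hzc, htc, hab, hba, hac, hca, hbc, hcb]
  have fivesumR : ∀ g : V × V × V → ℝ, ∑ p ∈ five, g p
      = g (x,y,t) + g (a,t,y) + g (a,y,z) + g (a,z,t) + g (x,z,y) := by
    intro g; rw [hfivedef]; exact sum5 g _ _ _ _ _ h5n1 h5n2 h5n3 h5n4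
  have fivesumV : ∀ g : V × V × V → (V → V → ℝ), ∑ p ∈ five, g p
      = g (x,y,t) + g (a,t,y) + g (a,y,z) + g (a,z,t) + g (x,z,y) := by
    intro g; rw [hfivedef]; exact sum5 g _ _ _ _ _ h5n1 h5n2 h5n3 h5n4
  -- block sum lemmas
  have h9n : ∀ i : Fin d,
      ((a,t,c i) ∉ ({(c i,t,z),(c i,z,x),(c i,x,y),(c i,y,b i),(b i,y,z),(b i,z,x),(t,b i,x),(b i,t,a)} : Finset (V×V×V))) ∧
      ((c i,t,z) ∉ ({(c i,z,x),(c i,x,y),(c i,y,b i),(b i,y,z),(b i,z,x),(t,b i,x),(b i,t,a)} : Finset (V×V×V))) ∧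
      ((c i,z,x) ∉ ({(c i,x,y),(c i,y,b i),(b i,y,z),(b i,z,x),(t,b i,x),(b i,t,a)} : Finset (V×V×V))) ∧
      ((c i,x,y) ∉ ({(c i,y,b i),(b i,y,z),(b i,z,x),(t,b i,x),(b i,t,a)} : Finset (V×V×V))) ∧
      ((c i,y,b i) ∉ ({(b i,y,z),(b i,z,x),(t,b i,x),(b i,t,a)} : Finset (V×V×V))) ∧
      ((b i,y,z) ∉ ({(b i,z,x),(t,b i,x),(b i,t,a)} : Finset (V×V×V))) ∧
      ((b i,z,x) ∉ ({(t,b i,x),(b i,t,a)} : Finset (V×V×V))) ∧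
      ((t,b i,x) ∉ ({(b i,t,a)} : Finset (V×V×V))) := by
    intro i
    refine ⟨?_, ?_, ?_, ?_, ?_, ?_, ?_, ?_⟩ <;> simp [Prod.ext_iff, hxy, hxz, hxt, hyz, hyt, hzt, hyx, hzx, htx, hzy, hty, htz, hax, hay, haz, hat, hxa, hya, hza, hta, hbx, hby, hbz, hbt, hxb, hyb, hzb, htb, hcx, hcy, hcz, hct, hxc, hyc, hzc, htc, hab, hba, hac, hca, hbc, hcb]
  have blksumR : ∀ (g : V × V × V → ℝ) (i : Fin d), ∑ p ∈ blk i, g p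
      = g (a,t,c i) + g (c i,t,z) + g (c i,z,x) + g (c i,x,y) + g (c i,y,b i)
        + g (b i,y,z) + g (b i,z,x) + g (t,b i,x) + g (b i,t,a) := by
    intro g i
    rw [hblkdef]
    exact sum9 g _ _ _ _ _ _ _ _ _ (h9n i).1 (h9n i).2.1 (h9n i).2.2.1 (h9n i).2.2.2.1
      (h9n i).2.2.2.2.1 (h9n i).2.2.2.2.2.1 (h9n i).2.2.2.2.2.2.1 (h9n i).2.2.2.2.2.2.2
  have blksumV : ∀ (g : V × V × V → (V → V → ℝ)) (i : Fin d), ∑ p ∈ blk i, g p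
      = g (a,t,c i) + g (c i,t,z) + g (c i,z,x) + g (c i,x,y) + g (c i,y,b i)
        + g (b i,y,z) + g (b i,z,x) + g (t,b i,x) + g (b i,t,a) := by
    intro g i
    rw [hblkdef]
    exact sum9 g _ _ _ _ _ _ _ _ _ (h9n i).1 (h9n i).2.1 (h9n i).2.2.1 (h9n i).2.2.2.1
      (h9n i).2.2.2.2.1 (h9n i).2.2.2.2.2.1 (h9n i).2.2.2.2.2.2.1 (h9n i).2.2.2.2.2.2.2
  have hfivecard : five.card = 5 := by
    rw [hfivedef, Finset.card_insert_of_notMem h5n1, Finset.card_insert_of_notMem h5n2,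
      Finset.card_insert_of_notMem h5n3, Finset.card_insert_of_notMem h5n4,
      Finset.card_singleton]
  have hblkcard : ∀ i, (blk i).card = 9 := by
    intro i
    rw [hblkdef, Finset.card_insert_of_notMem (h9n i).1,
      Finset.card_insert_of_notMem (h9n i).2.1,
      Finset.card_insert_of_notMem (h9n i).2.2.1,
      Finset.card_insert_of_notMem (h9n i).2.2.2.1,
      Finset.card_insert_of_notMem (h9n i).2.2.2.2.1,
      Finset.card_insert_of_notMem (h9n i).2.2.2.2.2.1,
      Finset.card_insert_of_notMem (h9n i).2.2.2.2.2.2.1,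
      Finset.card_insert_of_notMem (h9n i).2.2.2.2.2.2.2,
      Finset.card_singleton]
  -- cardinality of G'
  have hcardG' : G'.card = l + 8 * d + 5 := by
    have hdl : d ≤ l := by
      rw [← hFcard, ← hl]; exact Finset.card_le_card hFsub
    rw [hG', Finset.card_union_of_disjoint hdisj1, Finset.card_union_of_disjoint hdisj2,
      Finset.card_sdiff_of_subset hFsub, Finset.card_biUnion (fun i _ j _ hij => hblkdisj i j hij)]
    simp only [hblkcard, hfivecard, hl, hFcard, Finset.sum_const, Finset.card_univ,
      Fintype.card_fin, smul_eq_mul]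
    omega
  -- vertex set of G'
  have hvert : vertexSet G' = vertexSet G ∪ {x, y, z, t} := by
    ext w
    constructor
    · intro hw
      obtain ⟨p, hpG', hwp⟩ := Finset.mem_biUnion.1 hw
      rw [hG'] at hpG'
      rcases Finset.mem_union.1 hpG' with hold | hnew
      · exact Finset.mem_union_left _
          (tripleSet_subset (Finset.mem_sdiff.1 hold).1 hwp)
      · rcases Finset.mem_union.1 hnew with h5 | hB
        · rw [hfivedef] at h5
          simp only [Finset.mem_insert, Finset.mem_singleton] at h5
          rcases h5 with rfl | rfl | rfl | rfl | rfl <;>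
            (simp only [tripleSet, Finset.mem_insert, Finset.mem_singleton] at hwp;
             rcases hwp with rfl | rfl | rfl <;> simp [hav])
        · obtain ⟨i, -, hB⟩ := Finset.mem_biUnion.1 hB
          rw [hblkdef] at hB
          simp only [Finset.mem_insert, Finset.mem_singleton] at hB
          rcases hB with rfl | rfl | rfl | rfl | rfl | rfl | rfl | rfl | rfl <;>
            (simp only [tripleSet, Finset.mem_insert, Finset.mem_singleton] at hwp;
             rcases hwp with rfl | rfl | rfl <;> simp [hav, hbv i, hcv i])
    · intro hw
      rcases Finset.mem_union.1 hw with hwG | hwN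
      · obtain ⟨p, hpG, hwp⟩ := Finset.mem_biUnion.1 hwG
        by_cases hpF : p ∈ F
        · rw [hFdef] at hpF
          obtain ⟨i, -, rfl⟩ := Finset.mem_image.1 hpF
          simp only [tripleSet, Finset.mem_insert, Finset.mem_singleton] at hwp
          rcases hwp with h | h | h <;> rw [h]
          · exact Finset.mem_biUnion.2 ⟨(a,t,y), by
              rw [hG']; exact Finset.mem_union_right _
                (Finset.mem_union_left _ (by simp [hfivedef])), by simp [tripleSet]⟩
          · exact Finset.mem_biUnion.2 ⟨(b i,y,z), by
              rw [hG']; exact Finset.mem_union_right _ (Finset.mem_union_right _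
                (Finset.mem_biUnion.2 ⟨i, Finset.mem_univ i, by simp [hblkdef]⟩)),
              by simp [tripleSet]⟩
          · exact Finset.mem_biUnion.2 ⟨(c i,t,z), by
              rw [hG']; exact Finset.mem_union_right _ (Finset.mem_union_right _
                (Finset.mem_biUnion.2 ⟨i, Finset.mem_univ i, by simp [hblkdef]⟩)),
              by simp [tripleSet]⟩
        · exact Finset.mem_biUnion.2 ⟨p, by
            rw [hG']; exact Finset.mem_union_left _ (Finset.mem_sdiff.2 ⟨hpG, hpF⟩), hwp⟩
      · have hxyt : (x,y,t) ∈ G' := by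
          rw [hG']
          exact Finset.mem_union_right _ (Finset.mem_union_left _ (by simp [hfivedef]))
        have hazt : (a,z,t) ∈ G' := by
          rw [hG']
          exact Finset.mem_union_right _ (Finset.mem_union_left _ (by simp [hfivedef]))
        simp only [Finset.mem_insert, Finset.mem_singleton] at hwN
        rcases hwN with h | h | h | h <;> rw [h]
        · exact Finset.mem_biUnion.2 ⟨(x,y,t), hxyt, by simp [tripleSet]⟩
        · exact Finset.mem_biUnion.2 ⟨(x,y,t), hxyt, by simp [tripleSet]⟩
        · exact Finset.mem_biUnion.2 ⟨(a,z,t), hazt, by simp [tripleSet]⟩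
        · exact Finset.mem_biUnion.2 ⟨(x,y,t), hxyt, by simp [tripleSet]⟩
  have hvcard : (vertexSet G').card = k + 4 := by
    rw [hvert, Finset.card_union_of_disjoint, hk]
    · have : ({x, y, z, t} : Finset V).card = 4 := by
        rw [Finset.card_insert_of_notMem (by simp [hxy, hxz, hxt]),
          Finset.card_insert_of_notMem (by simp [hyz, hyt]),
          Finset.card_insert_of_notMem (by simp [hzt]), Finset.card_singleton]
      omega
    · rw [Finset.disjoint_right]
      intro w hw hwG
      simp only [Finset.mem_insert, Finset.mem_singleton] at hw
      rcases hw with rfl | rfl | rfl | rfl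
      exacts [hx hwG, hy hwG, hz hwG, ht hwG]
  -- star system
  have hstar : ∃ S : Finset (V × V × V), S ⊆ G' ∧ S.card = d + 2 ∧ IsStarSystem S := by
    refine ⟨insert (x,y,t) (insert (a,y,z)
      (Finset.image (fun i => (c i, y, b i)) Finset.univ)), ?_, ?_, ?_⟩
    · intro p hp
      simp only [Finset.mem_insert, Finset.mem_image, Finset.mem_univ, true_and] at hp
      rw [hG']
      rcases hp with rfl | rfl | ⟨i, rfl⟩
      · exact Finset.mem_union_right _ (Finset.mem_union_left _ (by simp [hfivedef]))
      · exact Finset.mem_union_right _ (Finset.mem_union_left _ (by simp [hfivedef]))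
      · exact Finset.mem_union_right _ (Finset.mem_union_right _
          (Finset.mem_biUnion.2 ⟨i, Finset.mem_univ i, by simp [hblkdef]⟩))
    · rw [Finset.card_insert_of_notMem, Finset.card_insert_of_notMem,
        Finset.card_image_of_injective, Finset.card_univ, Fintype.card_fin]
      · intro i j h
        exact hc (congrArg (fun q => q.1) h)
      · simp only [Finset.mem_image, Finset.mem_univ, true_and, not_exists]
        intro i h
        exact hac i (congrArg (fun q : V×V×V => q.1) h).symm
      · simp only [Finset.mem_insert, Finset.mem_image, Finset.mem_univ, true_and,
          not_or, not_exists]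
        refine ⟨by simp [Prod.ext_iff, hxa], fun i h => ?_⟩
        exact hcx i (congrArg (fun q : V×V×V => q.1) h)
    · refine ⟨y, ?_⟩
      intro p hp q hq hpq
      simp only [Finset.mem_insert, Finset.mem_image, Finset.mem_univ, true_and] at hp hq
      have inter : ∀ (u₁ u₂ v₁ v₂ : V), u₁ ≠ v₁ → u₁ ≠ v₂ → u₂ ≠ v₁ → u₂ ≠ v₂ →
          u₁ ≠ y → u₂ ≠ y → v₁ ≠ y → v₂ ≠ y →
          tripleSet (u₁, y, u₂) ∩ tripleSet (v₁, y, v₂) = {y} := by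
        intro u₁ u₂ v₁ v₂ h1 h2 h3 h4 h5 h6 h7 h8
        ext w
        simp only [tripleSet, Finset.mem_inter, Finset.mem_insert, Finset.mem_singleton]
        constructor
        · rintro ⟨rfl | rfl | rfl, hw⟩
          · rcases hw with h | h | h
            · exact absurd h h1
            · exact h
            · exact absurd h h2
          · exact rfl
          · rcases hw with h | h | h
            · exact absurd h h3
            · exact h
            · exact absurd h h4
        · rintro rfl
          exact ⟨Or.inr (Or.inl rfl), Or.inr (Or.inl rfl)⟩
      rcases hp with rfl | rfl | ⟨i, rfl⟩ <;> rcases hq with rfl | rfl | ⟨j, rfl⟩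
      · exact absurd rfl hpq
      · exact inter x t a z hxa hxz hta htz hxy hty hay hzy
      · exact inter x t (c j) (b j) (hxc j) (hxb j) (htc j) (htb j) hxy hty
          (hcy j) (hby j)
      · exact inter a z x t hax hat hzx hzt hay hzy hxy hty
      · exact absurd rfl hpq
      · exact inter a z (c j) (b j) (hac j) (hab j) (hzc j) (hzb j) hay hzy (hcy j) (hby j)
      · exact inter (c i) (b i) x t (hcx i) (hct i) (hbx i) (hbt i) (hcy i) (hby i)
          hxy hty
      · exact inter (c i) (b i) a z (hca i) (hcz i) (hba i) (hbz i) (hcy i) (hby i)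
          hay hzy
      · have hij : i ≠ j := by
          intro h
          exact hpq (by rw [h])
        exact inter (c i) (b i) (c j) (b j) (fun h => hij (hc h)) (hcb i j) (hbc i j)
          (fun h => hij (hb h)) (hcy i) (hby i) (hcy j) (hby j)

  -- memberships in G'
  have hT1G' : (x,y,t) ∈ G' := by
    rw [hG']; exact Finset.mem_union_right _ (Finset.mem_union_left _ (by simp [hfivedef]))
  have hblkmem : ∀ i : Fin d, ∀ p ∈ blk i, p ∈ G' := by
    intro i p hp
    rw [hG']
    exact Finset.mem_union_right _ (Finset.mem_union_right _
      (Finset.mem_biUnion.2 ⟨i, Finset.mem_univ i, hp⟩))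
  have hFnotG' : ∀ i : Fin d, (a, b i, c i) ∉ G' := by
    intro i hmem'
    rw [hG'] at hmem'
    rcases Finset.mem_union.1 hmem' with hold | hnew
    · exact (Finset.mem_sdiff.1 hold).2 (by
        rw [hFdef]; exact Finset.mem_image.2 ⟨i, Finset.mem_univ i, rfl⟩)
    · rcases Finset.mem_union.1 hnew with h5 | hB
      · rw [hfivedef] at h5
        simp [Prod.ext_iff, hxy, hxz, hxt, hyz, hyt, hzt, hyx, hzx, htx, hzy, hty, htz, hax, hay, haz, hat, hxa, hya, hza, hta, hbx, hby, hbz, hbt, hxb, hyb, hzb, htb, hcx, hcy, hcz, hct, hxc, hyc, hzc, htc, hab, hba, hac, hca, hbc, hcb] at h5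
      · obtain ⟨j, -, hB⟩ := Finset.mem_biUnion.1 hB
        rw [hblkdef] at hB
        simp [Prod.ext_iff, hxy, hxz, hxt, hyz, hyt, hzt, hyx, hzx, htx, hzy, hty, htz, hax, hay, haz, hat, hxa, hya, hza, hta, hbx, hby, hbz, hbt, hxb, hyb, hzb, htb, hcx, hcy, hcz, hct, hxc, hyc, hzc, htc, hab, hba, hac, hca, hbc, hcb] at hB
  -- splitting lemmas
  have hsplitR : ∀ g : V × V × V → ℝ, ∑ p ∈ G', g p = (∑ p ∈ G \ F, g p)
      + (g (x,y,t) + g (a,t,y) + g (a,y,z) + g (a,z,t) + g (x,z,y))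
      + ∑ i : Fin d, (g (a,t,c i) + g (c i,t,z) + g (c i,z,x) + g (c i,x,y)
          + g (c i,y,b i) + g (b i,y,z) + g (b i,z,x) + g (t,b i,x) + g (b i,t,a)) := by
    intro g
    rw [hG', Finset.sum_union hdisj1, Finset.sum_union hdisj2, Finset.sum_biUnion hpd,
      fivesumR g]
    simp only [blksumR g]
    ring
  have hsplitV : ∀ g : V × V × V → (V → V → ℝ), ∑ p ∈ G', g p = (∑ p ∈ G \ F, g p)
      + (g (x,y,t) + g (a,t,y) + g (a,y,z) + g (a,z,t) + g (x,z,y))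
      + ∑ i : Fin d, (g (a,t,c i) + g (c i,t,z) + g (c i,z,x) + g (c i,x,y)
          + g (c i,y,b i) + g (b i,y,z) + g (b i,z,x) + g (t,b i,x) + g (b i,t,a)) := by
    intro g
    rw [hG', Finset.sum_union hdisj1, Finset.sum_union hdisj2, Finset.sum_biUnion hpd,
      fivesumV g]
    simp only [blksumV g]
    abel
  -- the key replacement identity, in summed form
  have pattern : ∀ μ : Fin d → ℝ,
      ((∑ i : Fin d, μ i) • cVec (x,y,t) + (∑ i : Fin d, μ i) • cVec (a,t,y)
        + (∑ i : Fin d, μ i) • cVec (a,y,z) + (∑ i : Fin d, μ i) • cVec (a,z,t)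
        + (2 * ∑ i : Fin d, μ i) • cVec (x,z,y))
      + ∑ i : Fin d, (μ i • cVec (a,t,c i) + μ i • cVec (c i,t,z) + μ i • cVec (c i,z,x)
          + μ i • cVec (c i,x,y) + μ i • cVec (c i,y,b i) + μ i • cVec (b i,y,z)
          + μ i • cVec (b i,z,x) + μ i • cVec (t,b i,x) + μ i • cVec (b i,t,a))
      = ∑ i : Fin d, μ i • cVec (a, b i, c i) := by
    intro μ
    have h1 : ∀ v : V → V → ℝ, (∑ i : Fin d, μ i) • v = ∑ i : Fin d, μ i • v :=
      fun v => Finset.sum_smul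
    have h2 : (2 * ∑ i : Fin d, μ i) • cVec (x,z,y)
        = ∑ i : Fin d, (2 * μ i) • cVec (x,z,y) := by
      rw [Finset.mul_sum, Finset.sum_smul]
    rw [h1, h1, h1, h1, h2, ← Finset.sum_add_distrib, ← Finset.sum_add_distrib,
      ← Finset.sum_add_distrib, ← Finset.sum_add_distrib, ← Finset.sum_add_distrib]
    refine Finset.sum_congr rfl fun i _ => ?_
    rw [← keyIdentity a (b i) (c i) x y z t]
    module
  -- ==================== existence of the full cycle ====================
  obtain ⟨hGcyc, hGuniq⟩ := hG
  obtain ⟨-, -, α, hαpos, hαsum⟩ := hGcyc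
  set μ0 : Fin d → ℝ := fun i => α (a, b i, c i) with hμ0def
  have hμ0pos : ∀ i, 0 < μ0 i := fun i => hαpos _ (hmem i)
  have hM0pos : 0 < ∑ i : Fin d, μ0 i :=
    Finset.sum_pos (fun i _ => hμ0pos i) ⟨i₀, Finset.mem_univ i₀⟩
  set w0 : V × V × V → ℝ := fun p =>
    if p ∈ G then α p
    else if p = (x,z,y) then 2 * ∑ i : Fin d, μ0 i
    else if p = (x,y,t) ∨ p = (a,t,y) ∨ p = (a,y,z) ∨ p = (a,z,t) then ∑ i : Fin d, μ0 i
    else ∑ i : Fin d, (if p ∈ blk i then μ0 i else 0) with hw0def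
  have hfivemem : ∀ p ∈ five, p ∈ five ∪ Finset.univ.biUnion blk :=
    fun p hp => Finset.mem_union_left _ hp
  have w0T1 : w0 (x,y,t) = ∑ i : Fin d, μ0 i := by
    simp only [hw0def]
    rw [if_neg (hnewG _ (hfivemem _ (by simp [hfivedef]))),
      if_neg (by simp [Prod.ext_iff, hxy, hxz, hxt, hyz, hyt, hzt, hyx, hzx, htx, hzy, hty, htz, hax, hay, haz, hat, hxa, hya, hza, hta, hbx, hby, hbz, hbt, hxb, hyb, hzb, htb, hcx, hcy, hcz, hct, hxc, hyc, hzc, htc, hab, hba, hac, hca, hbc, hcb])]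
    simp
  have w0T2 : w0 (a,t,y) = ∑ i : Fin d, μ0 i := by
    simp only [hw0def]
    rw [if_neg (hnewG _ (hfivemem _ (by simp [hfivedef]))),
      if_neg (by simp [Prod.ext_iff, hxy, hxz, hxt, hyz, hyt, hzt, hyx, hzx, htx, hzy, hty, htz, hax, hay, haz, hat, hxa, hya, hza, hta, hbx, hby, hbz, hbt, hxb, hyb, hzb, htb, hcx, hcy, hcz, hct, hxc, hyc, hzc, htc, hab, hba, hac, hca, hbc, hcb])]
    simp
  have w0T3 : w0 (a,y,z) = ∑ i : Fin d, μ0 i := by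
    simp only [hw0def]
    rw [if_neg (hnewG _ (hfivemem _ (by simp [hfivedef]))),
      if_neg (by simp [Prod.ext_iff, hxy, hxz, hxt, hyz, hyt, hzt, hyx, hzx, htx, hzy, hty, htz, hax, hay, haz, hat, hxa, hya, hza, hta, hbx, hby, hbz, hbt, hxb, hyb, hzb, htb, hcx, hcy, hcz, hct, hxc, hyc, hzc, htc, hab, hba, hac, hca, hbc, hcb])]
    simp
  have w0T4 : w0 (a,z,t) = ∑ i : Fin d, μ0 i := by
    simp only [hw0def]
    rw [if_neg (hnewG _ (hfivemem _ (by simp [hfivedef]))),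
      if_neg (by simp [Prod.ext_iff, hxy, hxz, hxt, hyz, hyt, hzt, hyx, hzx, htx, hzy, hty, htz, hax, hay, haz, hat, hxa, hya, hza, hta, hbx, hby, hbz, hbt, hxb, hyb, hzb, htb, hcx, hcy, hcz, hct, hxc, hyc, hzc, htc, hab, hba, hac, hca, hbc, hcb])]
    simp
  have w0T5 : w0 (x,z,y) = 2 * ∑ i : Fin d, μ0 i := by
    simp only [hw0def]
    rw [if_neg (hnewG _ (hfivemem _ (by simp [hfivedef])))]
    simp
  have w0blk : ∀ i : Fin d, ∀ p ∈ blk i, w0 p = μ0 i := by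
    intro i p hp
    have hpNG : p ∉ G := hnewG p (Finset.mem_union_right _
      (Finset.mem_biUnion.2 ⟨i, Finset.mem_univ i, hp⟩))
    have hne1 : ¬ p = (x,z,y) := by
      rw [hblkdef] at hp
      simp only [Finset.mem_insert, Finset.mem_singleton] at hp
      rcases hp with rfl|rfl|rfl|rfl|rfl|rfl|rfl|rfl|rfl <;> simp [Prod.ext_iff, hxy, hxz, hxt, hyz, hyt, hzt, hyx, hzx, htx, hzy, hty, htz, hax, hay, haz, hat, hxa, hya, hza, hta, hbx, hby, hbz, hbt, hxb, hyb, hzb, htb, hcx, hcy, hcz, hct, hxc, hyc, hzc, htc, hab, hba, hac, hca, hbc, hcb]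
    have hne2 : ¬ (p = (x,y,t) ∨ p = (a,t,y) ∨ p = (a,y,z) ∨ p = (a,z,t)) := by
      rw [hblkdef] at hp
      simp only [Finset.mem_insert, Finset.mem_singleton] at hp
      rcases hp with rfl|rfl|rfl|rfl|rfl|rfl|rfl|rfl|rfl <;> simp [Prod.ext_iff, hxy, hxz, hxt, hyz, hyt, hzt, hyx, hzx, htx, hzy, hty, htz, hax, hay, haz, hat, hxa, hya, hza, hta, hbx, hby, hbz, hbt, hxb, hyb, hzb, htb, hcx, hcy, hcz, hct, hxc, hyc, hzc, htc, hab, hba, hac, hca, hbc, hcb]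
    simp only [hw0def]
    rw [if_neg hpNG, if_neg hne1, if_neg hne2,
      Finset.sum_eq_single_of_mem i (Finset.mem_univ i)
        (fun j _ hji => if_neg (Finset.disjoint_left.1 (hblkdisj i j (Ne.symm hji)) hp)),
      if_pos hp]
  have hAcyc : IsCycleOn G' G' := by
    refine ⟨⟨(x,y,t), hT1G'⟩, Finset.Subset.refl _, w0, ?_, ?_⟩
    · intro p hp
      rw [hG'] at hp
      rcases Finset.mem_union.1 hp with hold | hnew
      · have hpG := (Finset.mem_sdiff.1 hold).1
        have : w0 p = α p := by simp only [hw0def]; rw [if_pos hpG]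
        rw [this]; exact hαpos p hpG
      · rcases Finset.mem_union.1 hnew with h5 | hB
        · rw [hfivedef] at h5
          simp only [Finset.mem_insert, Finset.mem_singleton] at h5
          rcases h5 with rfl | rfl | rfl | rfl | rfl
          · rw [w0T1]; exact hM0pos
          · rw [w0T2]; exact hM0pos
          · rw [w0T3]; exact hM0pos
          · rw [w0T4]; exact hM0pos
          · rw [w0T5]; linarith
        · obtain ⟨i, -, hB⟩ := Finset.mem_biUnion.1 hB
          rw [w0blk i p hB]; exact hμ0pos i
    · have holdval : ∑ p ∈ G \ F, w0 p • cVec p = ∑ p ∈ G \ F, α p • cVec p :=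
        Finset.sum_congr rfl fun p hp => by
          simp only [hw0def]; rw [if_pos (Finset.mem_sdiff.1 hp).1]
      have hFval : ∑ p ∈ F, α p • cVec p = ∑ i : Fin d, μ0 i • cVec (a, b i, c i) := by
        rw [hFdef, Finset.sum_image (fun i _ j _ h => hFinj h)]
      have holdval2 : ∑ p ∈ G \ F, α p • cVec p
          = 0 - ∑ i : Fin d, μ0 i • cVec (a, b i, c i) := by
        rw [← hαsum, ← Finset.sum_sdiff hFsub, hFval]
        abel
      have hblkval : ∑ i : Fin d, (w0 (a,t,c i) • cVec (a,t,c i) + w0 (c i,t,z) • cVec (c i,t,z)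
            + w0 (c i,z,x) • cVec (c i,z,x) + w0 (c i,x,y) • cVec (c i,x,y)
            + w0 (c i,y,b i) • cVec (c i,y,b i) + w0 (b i,y,z) • cVec (b i,y,z)
            + w0 (b i,z,x) • cVec (b i,z,x) + w0 (t,b i,x) • cVec (t,b i,x)
            + w0 (b i,t,a) • cVec (b i,t,a))
          = ∑ i : Fin d, (μ0 i • cVec (a,t,c i) + μ0 i • cVec (c i,t,z)
            + μ0 i • cVec (c i,z,x) + μ0 i • cVec (c i,x,y) + μ0 i • cVec (c i,y,b i)
            + μ0 i • cVec (b i,y,z) + μ0 i • cVec (b i,z,x) + μ0 i • cVec (t,b i,x)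
            + μ0 i • cVec (b i,t,a)) := by
        refine Finset.sum_congr rfl fun i _ => ?_
        rw [w0blk i _ (by simp [hblkdef]), w0blk i _ (by simp [hblkdef]),
          w0blk i _ (by simp [hblkdef]), w0blk i _ (by simp [hblkdef]),
          w0blk i _ (by simp [hblkdef]), w0blk i _ (by simp [hblkdef]),
          w0blk i _ (by simp [hblkdef]), w0blk i _ (by simp [hblkdef]),
          w0blk i _ (by simp [hblkdef])]
      have hfin : (∑ p ∈ G \ F, w0 p • cVec p)
          + (w0 (x,y,t) • cVec (x,y,t) + w0 (a,t,y) • cVec (a,t,y)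
            + w0 (a,y,z) • cVec (a,y,z) + w0 (a,z,t) • cVec (a,z,t)
            + w0 (x,z,y) • cVec (x,z,y))
          + ∑ i : Fin d, (w0 (a,t,c i) • cVec (a,t,c i) + w0 (c i,t,z) • cVec (c i,t,z)
            + w0 (c i,z,x) • cVec (c i,z,x) + w0 (c i,x,y) • cVec (c i,x,y)
            + w0 (c i,y,b i) • cVec (c i,y,b i) + w0 (b i,y,z) • cVec (b i,y,z)
            + w0 (b i,z,x) • cVec (b i,z,x) + w0 (t,b i,x) • cVec (t,b i,x)
            + w0 (b i,t,a) • cVec (b i,t,a)) = 0 := by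
        rw [holdval, holdval2, w0T1, w0T2, w0T3, w0T4, w0T5, hblkval, add_assoc,
          pattern μ0]
        abel
      rw [hsplitV (fun p => w0 p • cVec p)]
      exact hfin
  -- ==================== uniqueness ====================
  have hBuniq : ∀ C, IsCycleOn G' C → C = G' := by
    intro C hC
    obtain ⟨⟨q, hqC⟩, hCsub, αC, hαCpos, hαCsum⟩ := hC
    set β : V × V × V → ℝ := fun p => if p ∈ C then αC p else 0 with hβdef
    have hβnn : ∀ p, 0 ≤ β p := by
      intro p
      simp only [hβdef]
      split
      · exact le_of_lt (hαCpos _ ‹_›)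
      · exact le_refl 0
    have hβzero : ∀ p, p ∉ C → β p = 0 := by
      intro p hp; simp only [hβdef]; rw [if_neg hp]
    have hβposC : ∀ p, 0 < β p → p ∈ C := by
      intro p hp
      by_contra hpc
      rw [hβzero p hpc] at hp
      exact lt_irrefl 0 hp
    have hβG' : ∑ p ∈ G', β p • cVec p = 0 := by
      rw [← Finset.sum_subset hCsub (fun p _ hpC => by rw [hβzero p hpC, zero_smul]),
        ← hαCsum]
      exact Finset.sum_congr rfl fun p hp => by simp only [hβdef]; rw [if_pos hp]
    have hE := sum_apply₂ hβG'
    have hscal : ∀ u v : V, (∑ p ∈ G \ F, β p * cVec p u v)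
        + (β (x,y,t) * cVec (x,y,t) u v + β (a,t,y) * cVec (a,t,y) u v
          + β (a,y,z) * cVec (a,y,z) u v + β (a,z,t) * cVec (a,z,t) u v
          + β (x,z,y) * cVec (x,z,y) u v)
        + ∑ i : Fin d, (β (a,t,c i) * cVec (a,t,c i) u v + β (c i,t,z) * cVec (c i,t,z) u v
          + β (c i,z,x) * cVec (c i,z,x) u v + β (c i,x,y) * cVec (c i,x,y) u v
          + β (c i,y,b i) * cVec (c i,y,b i) u v + β (b i,y,z) * cVec (b i,y,z) u v
          + β (b i,z,x) * cVec (b i,z,x) u v + β (t,b i,x) * cVec (t,b i,x) u v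
          + β (b i,t,a) * cVec (b i,t,a) u v) = 0 := by
      intro u v
      have hh := hE u v
      rw [hsplitR (fun p => β p * cVec p u v)] at hh
      exact hh
    have holdz : ∀ (u v : V), u ∉ vertexSet G →
        ∑ p ∈ G \ F, β p * cVec p u v = 0 := by
      intro u v hu
      refine Finset.sum_eq_zero fun p hp => ?_
      rw [cVec_zero_left (fun hmem' => hu (tripleSet_subset (Finset.mem_sdiff.1 hp).1 hmem')) v,
        mul_zero]
    -- global edge equations
    have eyt : β (x,y,t) = β (a,t,y) := by
      have h := hscal y t
      rw [holdz y t hy] at h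
      simp only [cVec, incVec, edgeVec, Pi.add_apply, hxy, hxz, hxt, hyz, hyt, hzt, hyx, hzx, htx, hzy, hty, htz, hax, hay, haz, hat, hxa, hya, hza, hta, hbx, hby, hbz, hbt, hxb, hyb, hzb, htb, hcx, hcy, hcz, hct, hxc, hyc, hzc, htc, hab, hba, hac, hca, hbc, hcb, if_true, if_false,
        and_true, true_and, and_false, false_and, and_self, ite_true, ite_false,
        eq_self_iff_true, ne_eq, not_false_iff] at h
      simp only [if_neg, mul_zero, mul_one, add_zero, zero_add, sub_zero, zero_sub,
        sub_self, mul_neg, Finset.sum_const_zero] at h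
      linarith
    have holdz2 : ∀ (u v : V), v ∉ vertexSet G →
        ∑ p ∈ G \ F, β p * cVec p u v = 0 := by
      intro u v hv
      refine Finset.sum_eq_zero fun p hp => ?_
      rw [cVec_zero_right (fun hmem' => hv (tripleSet_subset (Finset.mem_sdiff.1 hp).1 hmem')) u,
        mul_zero]
    have eay : β (a,y,z) = β (a,t,y) := by
      have h := hscal a y
      rw [holdz2 a y hy] at h
      simp only [cVec, incVec, edgeVec, Pi.add_apply, hxy, hxz, hxt, hyz, hyt, hzt, hyx, hzx, htx, hzy, hty, htz, hax, hay, haz, hat, hxa, hya, hza, hta, hbx, hby, hbz, hbt, hxb, hyb, hzb, htb, hcx, hcy, hcz, hct, hxc, hyc, hzc, htc, hab, hba, hac, hca, hbc, hcb, if_true, if_false,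
        and_true, true_and, and_false, false_and, and_self, ite_true, ite_false,
        eq_self_iff_true, ne_eq, not_false_iff] at h
      simp only [if_neg, mul_zero, mul_one, add_zero, zero_add, sub_zero, zero_sub,
        sub_self, mul_neg, neg_neg, neg_zero, Finset.sum_const_zero] at h
      linarith
    have eaz : β (a,z,t) = β (a,y,z) := by
      have h := hscal a z
      rw [holdz2 a z hz] at h
      simp only [cVec, incVec, edgeVec, Pi.add_apply, hxy, hxz, hxt, hyz, hyt, hzt, hyx, hzx, htx, hzy, hty, htz, hax, hay, haz, hat, hxa, hya, hza, hta, hbx, hby, hbz, hbt, hxb, hyb, hzb, htb, hcx, hcy, hcz, hct, hxc, hyc, hzc, htc, hab, hba, hac, hca, hbc, hcb, if_true, if_false,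
        and_true, true_and, and_false, false_and, and_self, ite_true, ite_false,
        eq_self_iff_true, ne_eq, not_false_iff] at h
      simp only [if_neg, mul_zero, mul_one, add_zero, zero_add, sub_zero, zero_sub,
        sub_self, mul_neg, neg_neg, neg_zero, Finset.sum_const_zero] at h
      linarith
    have etx : β (x,y,t) = ∑ i : Fin d, β (t,b i,x) := by
      have h := hscal t x
      rw [holdz t x ht] at h
      simp only [cVec, incVec, edgeVec, Pi.add_apply, hxy, hxz, hxt, hyz, hyt, hzt, hyx, hzx, htx, hzy, hty, htz, hax, hay, haz, hat, hxa, hya, hza, hta, hbx, hby, hbz, hbt, hxb, hyb, hzb, htb, hcx, hcy, hcz, hct, hxc, hyc, hzc, htc, hab, hba, hac, hca, hbc, hcb, if_true, if_false,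
        and_true, true_and, and_false, false_and, and_self, ite_true, ite_false,
        eq_self_iff_true, ne_eq, not_false_iff] at h
      simp only [if_neg, mul_zero, mul_one, add_zero, zero_add, sub_zero, zero_sub,
        sub_self, mul_neg, neg_neg, neg_zero, Finset.sum_const_zero] at h
      rw [Finset.sum_neg_distrib] at h
      linarith
    have exz : β (x,z,y) = (∑ i : Fin d, β (c i,z,x)) + ∑ i : Fin d, β (b i,z,x) := by
      have h := hscal x z
      rw [holdz x z hx] at h
      simp only [cVec, incVec, edgeVec, Pi.add_apply, hxy, hxz, hxt, hyz, hyt, hzt, hyx, hzx, htx, hzy, hty, htz, hax, hay, haz, hat, hxa, hya, hza, hta, hbx, hby, hbz, hbt, hxb, hyb, hzb, htb, hcx, hcy, hcz, hct, hxc, hyc, hzc, htc, hab, hba, hac, hca, hbc, hcb, if_true, if_false,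
        and_true, true_and, and_false, false_and, and_self, ite_true, ite_false,
        eq_self_iff_true, ne_eq, not_false_iff] at h
      simp only [if_neg, mul_zero, mul_one, add_zero, zero_add, sub_zero, zero_sub,
        sub_self, mul_neg, neg_neg, neg_zero, Finset.sum_const_zero] at h
      rw [Finset.sum_add_distrib, Finset.sum_neg_distrib, Finset.sum_neg_distrib] at h
      linarith
    have eB1 : ∀ i : Fin d, β (a,t,c i) = β (c i,t,z) := by
      intro i
      have h := hscal t (c i)
      rw [holdz t (c i) ht] at h
      rw [Finset.sum_eq_single_of_mem i (Finset.mem_univ i) (fun j _ hji => by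
        have hcc : c j ≠ c i := fun hh => hji (hc hh)
        have hcc' : c i ≠ c j := hcc.symm
        have hbb : b j ≠ b i := fun hh => hji (hb hh)
        have hbb' : b i ≠ b j := hbb.symm
        simp [cVec, incVec, edgeVec, hcc, hcc', hbb, hbb', hxy, hxz, hxt, hyz, hyt, hzt, hyx, hzx, htx, hzy, hty, htz, hax, hay, haz, hat, hxa, hya, hza, hta, hbx, hby, hbz, hbt, hxb, hyb, hzb, htb, hcx, hcy, hcz, hct, hxc, hyc, hzc, htc, hab, hba, hac, hca, hbc, hcb])] at h
      simp only [cVec, incVec, edgeVec, Pi.add_apply, hxy, hxz, hxt, hyz, hyt, hzt, hyx, hzx, htx, hzy, hty, htz, hax, hay, haz, hat, hxa, hya, hza, hta, hbx, hby, hbz, hbt, hxb, hyb, hzb, htb, hcx, hcy, hcz, hct, hxc, hyc, hzc, htc, hab, hba, hac, hca, hbc, hcb, if_true, if_false,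
        and_true, true_and, and_false, false_and, and_self, ite_true, ite_false,
        eq_self_iff_true, ne_eq, not_false_iff] at h
      simp only [if_neg, mul_zero, mul_one, add_zero, zero_add, sub_zero, zero_sub,
        sub_self, mul_neg, neg_neg, neg_zero, Finset.sum_const_zero] at h
      linarith
    have eB2 : ∀ i : Fin d, β (c i,t,z) = β (c i,z,x) := by
      intro i
      have h := hscal z (c i)
      rw [holdz z (c i) hz] at h
      rw [Finset.sum_eq_single_of_mem i (Finset.mem_univ i) (fun j _ hji => by
        have hcc : c j ≠ c i := fun hh => hji (hc hh)
        have hcc' : c i ≠ c j := hcc.symm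
        have hbb : b j ≠ b i := fun hh => hji (hb hh)
        have hbb' : b i ≠ b j := hbb.symm
        simp [cVec, incVec, edgeVec, hcc, hcc', hbb, hbb', hxy, hxz, hxt, hyz, hyt, hzt, hyx, hzx, htx, hzy, hty, htz, hax, hay, haz, hat, hxa, hya, hza, hta, hbx, hby, hbz, hbt, hxb, hyb, hzb, htb, hcx, hcy, hcz, hct, hxc, hyc, hzc, htc, hab, hba, hac, hca, hbc, hcb])] at h
      simp only [cVec, incVec, edgeVec, Pi.add_apply, hxy, hxz, hxt, hyz, hyt, hzt, hyx, hzx, htx, hzy, hty, htz, hax, hay, haz, hat, hxa, hya, hza, hta, hbx, hby, hbz, hbt, hxb, hyb, hzb, htb, hcx, hcy, hcz, hct, hxc, hyc, hzc, htc, hab, hba, hac, hca, hbc, hcb, if_true, if_false,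
        and_true, true_and, and_false, false_and, and_self, ite_true, ite_false,
        eq_self_iff_true, ne_eq, not_false_iff] at h
      simp only [if_neg, mul_zero, mul_one, add_zero, zero_add, sub_zero, zero_sub,
        sub_self, mul_neg, neg_neg, neg_zero, Finset.sum_const_zero] at h
      linarith
    have eB3 : ∀ i : Fin d, β (c i,z,x) = β (c i,x,y) := by
      intro i
      have h := hscal x (c i)
      rw [holdz x (c i) hx] at h
      rw [Finset.sum_eq_single_of_mem i (Finset.mem_univ i) (fun j _ hji => by
        have hcc : c j ≠ c i := fun hh => hji (hc hh)
        have hcc' : c i ≠ c j := hcc.symm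
        have hbb : b j ≠ b i := fun hh => hji (hb hh)
        have hbb' : b i ≠ b j := hbb.symm
        simp [cVec, incVec, edgeVec, hcc, hcc', hbb, hbb', hxy, hxz, hxt, hyz, hyt, hzt, hyx, hzx, htx, hzy, hty, htz, hax, hay, haz, hat, hxa, hya, hza, hta, hbx, hby, hbz, hbt, hxb, hyb, hzb, htb, hcx, hcy, hcz, hct, hxc, hyc, hzc, htc, hab, hba, hac, hca, hbc, hcb])] at h
      simp only [cVec, incVec, edgeVec, Pi.add_apply, hxy, hxz, hxt, hyz, hyt, hzt, hyx, hzx, htx, hzy, hty, htz, hax, hay, haz, hat, hxa, hya, hza, hta, hbx, hby, hbz, hbt, hxb, hyb, hzb, htb, hcx, hcy, hcz, hct, hxc, hyc, hzc, htc, hab, hba, hac, hca, hbc, hcb, if_true, if_false,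
        and_true, true_and, and_false, false_and, and_self, ite_true, ite_false,
        eq_self_iff_true, ne_eq, not_false_iff] at h
      simp only [if_neg, mul_zero, mul_one, add_zero, zero_add, sub_zero, zero_sub,
        sub_self, mul_neg, neg_neg, neg_zero, Finset.sum_const_zero] at h
      linarith
    have eB4 : ∀ i : Fin d, β (c i,x,y) = β (c i,y,b i) := by
      intro i
      have h := hscal y (c i)
      rw [holdz y (c i) hy] at h
      rw [Finset.sum_eq_single_of_mem i (Finset.mem_univ i) (fun j _ hji => by
        have hcc : c j ≠ c i := fun hh => hji (hc hh)
        have hcc' : c i ≠ c j := hcc.symm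
        have hbb : b j ≠ b i := fun hh => hji (hb hh)
        have hbb' : b i ≠ b j := hbb.symm
        simp [cVec, incVec, edgeVec, hcc, hcc', hbb, hbb', hxy, hxz, hxt, hyz, hyt, hzt, hyx, hzx, htx, hzy, hty, htz, hax, hay, haz, hat, hxa, hya, hza, hta, hbx, hby, hbz, hbt, hxb, hyb, hzb, htb, hcx, hcy, hcz, hct, hxc, hyc, hzc, htc, hab, hba, hac, hca, hbc, hcb])] at h
      simp only [cVec, incVec, edgeVec, Pi.add_apply, hxy, hxz, hxt, hyz, hyt, hzt, hyx, hzx, htx, hzy, hty, htz, hax, hay, haz, hat, hxa, hya, hza, hta, hbx, hby, hbz, hbt, hxb, hyb, hzb, htb, hcx, hcy, hcz, hct, hxc, hyc, hzc, htc, hab, hba, hac, hca, hbc, hcb, if_true, if_false,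
        and_true, true_and, and_false, false_and, and_self, ite_true, ite_false,
        eq_self_iff_true, ne_eq, not_false_iff] at h
      simp only [if_neg, mul_zero, mul_one, add_zero, zero_add, sub_zero, zero_sub,
        sub_self, mul_neg, neg_neg, neg_zero, Finset.sum_const_zero] at h
      linarith
    have eB5 : ∀ i : Fin d, β (c i,y,b i) = β (b i,y,z) := by
      intro i
      have h := hscal y (b i)
      rw [holdz y (b i) hy] at h
      rw [Finset.sum_eq_single_of_mem i (Finset.mem_univ i) (fun j _ hji => by
        have hcc : c j ≠ c i := fun hh => hji (hc hh)
        have hcc' : c i ≠ c j := hcc.symm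
        have hbb : b j ≠ b i := fun hh => hji (hb hh)
        have hbb' : b i ≠ b j := hbb.symm
        simp [cVec, incVec, edgeVec, hcc, hcc', hbb, hbb', hxy, hxz, hxt, hyz, hyt, hzt, hyx, hzx, htx, hzy, hty, htz, hax, hay, haz, hat, hxa, hya, hza, hta, hbx, hby, hbz, hbt, hxb, hyb, hzb, htb, hcx, hcy, hcz, hct, hxc, hyc, hzc, htc, hab, hba, hac, hca, hbc, hcb])] at h
      simp only [cVec, incVec, edgeVec, Pi.add_apply, hxy, hxz, hxt, hyz, hyt, hzt, hyx, hzx, htx, hzy, hty, htz, hax, hay, haz, hat, hxa, hya, hza, hta, hbx, hby, hbz, hbt, hxb, hyb, hzb, htb, hcx, hcy, hcz, hct, hxc, hyc, hzc, htc, hab, hba, hac, hca, hbc, hcb, if_true, if_false,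
        and_true, true_and, and_false, false_and, and_self, ite_true, ite_false,
        eq_self_iff_true, ne_eq, not_false_iff] at h
      simp only [if_neg, mul_zero, mul_one, add_zero, zero_add, sub_zero, zero_sub,
        sub_self, mul_neg, neg_neg, neg_zero, Finset.sum_const_zero] at h
      linarith
    have eB6 : ∀ i : Fin d, β (b i,y,z) = β (b i,z,x) := by
      intro i
      have h := hscal z (b i)
      rw [holdz z (b i) hz] at h
      rw [Finset.sum_eq_single_of_mem i (Finset.mem_univ i) (fun j _ hji => by
        have hcc : c j ≠ c i := fun hh => hji (hc hh)
        have hcc' : c i ≠ c j := hcc.symm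
        have hbb : b j ≠ b i := fun hh => hji (hb hh)
        have hbb' : b i ≠ b j := hbb.symm
        simp [cVec, incVec, edgeVec, hcc, hcc', hbb, hbb', hxy, hxz, hxt, hyz, hyt, hzt, hyx, hzx, htx, hzy, hty, htz, hax, hay, haz, hat, hxa, hya, hza, hta, hbx, hby, hbz, hbt, hxb, hyb, hzb, htb, hcx, hcy, hcz, hct, hxc, hyc, hzc, htc, hab, hba, hac, hca, hbc, hcb])] at h
      simp only [cVec, incVec, edgeVec, Pi.add_apply, hxy, hxz, hxt, hyz, hyt, hzt, hyx, hzx, htx, hzy, hty, htz, hax, hay, haz, hat, hxa, hya, hza, hta, hbx, hby, hbz, hbt, hxb, hyb, hzb, htb, hcx, hcy, hcz, hct, hxc, hyc, hzc, htc, hab, hba, hac, hca, hbc, hcb, if_true, if_false,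
        and_true, true_and, and_false, false_and, and_self, ite_true, ite_false,
        eq_self_iff_true, ne_eq, not_false_iff] at h
      simp only [if_neg, mul_zero, mul_one, add_zero, zero_add, sub_zero, zero_sub,
        sub_self, mul_neg, neg_neg, neg_zero, Finset.sum_const_zero] at h
      linarith
    have eB7 : ∀ i : Fin d, β (b i,z,x) = β (t,b i,x) := by
      intro i
      have h := hscal x (b i)
      rw [holdz x (b i) hx] at h
      rw [Finset.sum_eq_single_of_mem i (Finset.mem_univ i) (fun j _ hji => by
        have hcc : c j ≠ c i := fun hh => hji (hc hh)
        have hcc' : c i ≠ c j := hcc.symm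
        have hbb : b j ≠ b i := fun hh => hji (hb hh)
        have hbb' : b i ≠ b j := hbb.symm
        simp [cVec, incVec, edgeVec, hcc, hcc', hbb, hbb', hxy, hxz, hxt, hyz, hyt, hzt, hyx, hzx, htx, hzy, hty, htz, hax, hay, haz, hat, hxa, hya, hza, hta, hbx, hby, hbz, hbt, hxb, hyb, hzb, htb, hcx, hcy, hcz, hct, hxc, hyc, hzc, htc, hab, hba, hac, hca, hbc, hcb])] at h
      simp only [cVec, incVec, edgeVec, Pi.add_apply, hxy, hxz, hxt, hyz, hyt, hzt, hyx, hzx, htx, hzy, hty, htz, hax, hay, haz, hat, hxa, hya, hza, hta, hbx, hby, hbz, hbt, hxb, hyb, hzb, htb, hcx, hcy, hcz, hct, hxc, hyc, hzc, htc, hab, hba, hac, hca, hbc, hcb, if_true, if_false,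
        and_true, true_and, and_false, false_and, and_self, ite_true, ite_false,
        eq_self_iff_true, ne_eq, not_false_iff] at h
      simp only [if_neg, mul_zero, mul_one, add_zero, zero_add, sub_zero, zero_sub,
        sub_self, mul_neg, neg_neg, neg_zero, Finset.sum_const_zero] at h
      linarith
    have eB8 : ∀ i : Fin d, β (t,b i,x) = β (b i,t,a) := by
      intro i
      have h := hscal t (b i)
      rw [holdz t (b i) ht] at h
      rw [Finset.sum_eq_single_of_mem i (Finset.mem_univ i) (fun j _ hji => by
        have hcc : c j ≠ c i := fun hh => hji (hc hh)
        have hcc' : c i ≠ c j := hcc.symm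
        have hbb : b j ≠ b i := fun hh => hji (hb hh)
        have hbb' : b i ≠ b j := hbb.symm
        simp [cVec, incVec, edgeVec, hcc, hcc', hbb, hbb', hxy, hxz, hxt, hyz, hyt, hzt, hyx, hzx, htx, hzy, hty, htz, hax, hay, haz, hat, hxa, hya, hza, hta, hbx, hby, hbz, hbt, hxb, hyb, hzb, htb, hcx, hcy, hcz, hct, hxc, hyc, hzc, htc, hab, hba, hac, hca, hbc, hcb])] at h
      simp only [cVec, incVec, edgeVec, Pi.add_apply, hxy, hxz, hxt, hyz, hyt, hzt, hyx, hzx, htx, hzy, hty, htz, hax, hay, haz, hat, hxa, hya, hza, hta, hbx, hby, hbz, hbt, hxb, hyb, hzb, htb, hcx, hcy, hcz, hct, hxc, hyc, hzc, htc, hab, hba, hac, hca, hbc, hcb, if_true, if_false,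
        and_true, true_and, and_false, false_and, and_self, ite_true, ite_false,
        eq_self_iff_true, ne_eq, not_false_iff] at h
      simp only [if_neg, mul_zero, mul_one, add_zero, zero_add, sub_zero, zero_sub,
        sub_self, mul_neg, neg_neg, neg_zero, Finset.sum_const_zero] at h
      linarith
    set μ1 : Fin d → ℝ := fun i => β (b i, t, a) with hμ1def
    have hv9 : ∀ i, β (b i,t,a) = μ1 i := fun i => by simp [hμ1def]
    have hv8 : ∀ i, β (t,b i,x) = μ1 i := fun i => (eB8 i).trans (hv9 i)
    have hv7 : ∀ i, β (b i,z,x) = μ1 i := fun i => (eB7 i).trans (hv8 i)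
    have hv6 : ∀ i, β (b i,y,z) = μ1 i := fun i => (eB6 i).trans (hv7 i)
    have hv5 : ∀ i, β (c i,y,b i) = μ1 i := fun i => (eB5 i).trans (hv6 i)
    have hv4 : ∀ i, β (c i,x,y) = μ1 i := fun i => (eB4 i).trans (hv5 i)
    have hv3 : ∀ i, β (c i,z,x) = μ1 i := fun i => (eB3 i).trans (hv4 i)
    have hv2 : ∀ i, β (c i,t,z) = μ1 i := fun i => (eB2 i).trans (hv3 i)
    have hv1 : ∀ i, β (a,t,c i) = μ1 i := fun i => (eB1 i).trans (hv2 i)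
    have hT1v : β (x,y,t) = ∑ i : Fin d, μ1 i := by
      rw [etx]; exact Finset.sum_congr rfl fun i _ => hv8 i
    have hT2v : β (a,t,y) = ∑ i : Fin d, μ1 i := by rw [← eyt, hT1v]
    have hT3v : β (a,y,z) = ∑ i : Fin d, μ1 i := by rw [eay, hT2v]
    have hT4v : β (a,z,t) = ∑ i : Fin d, μ1 i := by rw [eaz, hT3v]
    have hT5v : β (x,z,y) = 2 * ∑ i : Fin d, μ1 i := by
      have h1 : ∑ i : Fin d, β (c i,z,x) = ∑ i : Fin d, μ1 i :=
        Finset.sum_congr rfl fun i _ => hv3 i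
      have h2 : ∑ i : Fin d, β (b i,z,x) = ∑ i : Fin d, μ1 i :=
        Finset.sum_congr rfl fun i _ => hv7 i
      rw [exz, h1, h2]; ring
    have hμ1nn : ∀ i, 0 ≤ μ1 i := fun i => by rw [← hv9 i]; exact hβnn _
    have hFne : ∀ (p : V × V × V) (i : Fin d), p ∉ F → p ≠ (a, b i, c i) := by
      intro p i hpF hpe
      exact hpF (by rw [hFdef, hpe]; exact Finset.mem_image.2 ⟨i, Finset.mem_univ i, rfl⟩)
    set γ : V × V × V → ℝ :=
      fun p => β p + ∑ i : Fin d, (if p = (a, b i, c i) then μ1 i else 0) with hγdef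
    have hγnn : ∀ p, 0 ≤ γ p := by
      intro p
      simp only [hγdef]
      refine add_nonneg (hβnn p) (Finset.sum_nonneg fun i _ => ?_)
      split
      · exact hμ1nn i
      · exact le_refl 0
    have hγoff : ∀ p, p ∉ F → γ p = β p := by
      intro p hpF
      simp only [hγdef]
      rw [Finset.sum_eq_zero fun i _ => if_neg (hFne p i hpF), add_zero]
    have hβF : ∀ i, β (a, b i, c i) = 0 :=
      fun i => hβzero _ (fun hmem' => hFnotG' i (hCsub hmem'))
    have hγF : ∀ i, γ (a, b i, c i) = μ1 i := by
      intro i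
      simp only [hγdef]
      rw [hβF i, Finset.sum_eq_single_of_mem i (Finset.mem_univ i)
        (fun j _ hji => if_neg (fun hh =>
          hji (hb (congrArg (fun q : V × V × V => q.2.1) hh)).symm))]
      simp
    have hγsum : ∑ p ∈ G, γ p • cVec p = 0 := by
      have hsumF : ∑ p ∈ F, γ p • cVec p = ∑ i : Fin d, μ1 i • cVec (a, b i, c i) := by
        rw [hFdef, Finset.sum_image (fun i _ j _ h => hFinj h)]
        exact Finset.sum_congr rfl fun i _ => by rw [hγF i]
      have hsumGF : ∑ p ∈ G \ F, γ p • cVec p = ∑ p ∈ G \ F, β p • cVec p :=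
        Finset.sum_congr rfl fun p hp => by rw [hγoff p (Finset.mem_sdiff.1 hp).2]
      have hh2 : (∑ p ∈ G \ F, β p • cVec p)
          + (β (x,y,t) • cVec (x,y,t) + β (a,t,y) • cVec (a,t,y)
            + β (a,y,z) • cVec (a,y,z) + β (a,z,t) • cVec (a,z,t)
            + β (x,z,y) • cVec (x,z,y))
          + ∑ i : Fin d, (β (a,t,c i) • cVec (a,t,c i) + β (c i,t,z) • cVec (c i,t,z)
            + β (c i,z,x) • cVec (c i,z,x) + β (c i,x,y) • cVec (c i,x,y)
            + β (c i,y,b i) • cVec (c i,y,b i) + β (b i,y,z) • cVec (b i,y,z)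
            + β (b i,z,x) • cVec (b i,z,x) + β (t,b i,x) • cVec (t,b i,x)
            + β (b i,t,a) • cVec (b i,t,a)) = 0 := by
        have hh := hβG'
        rw [hsplitV (fun p => β p • cVec p)] at hh
        exact hh
      rw [hT1v, hT2v, hT3v, hT4v, hT5v] at hh2
      have hbrw : ∑ i : Fin d, (β (a,t,c i) • cVec (a,t,c i) + β (c i,t,z) • cVec (c i,t,z)
            + β (c i,z,x) • cVec (c i,z,x) + β (c i,x,y) • cVec (c i,x,y)
            + β (c i,y,b i) • cVec (c i,y,b i) + β (b i,y,z) • cVec (b i,y,z)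
            + β (b i,z,x) • cVec (b i,z,x) + β (t,b i,x) • cVec (t,b i,x)
            + β (b i,t,a) • cVec (b i,t,a))
          = ∑ i : Fin d, (μ1 i • cVec (a,t,c i) + μ1 i • cVec (c i,t,z)
            + μ1 i • cVec (c i,z,x) + μ1 i • cVec (c i,x,y) + μ1 i • cVec (c i,y,b i)
            + μ1 i • cVec (b i,y,z) + μ1 i • cVec (b i,z,x) + μ1 i • cVec (t,b i,x)
            + μ1 i • cVec (b i,t,a)) :=
        Finset.sum_congr rfl fun i _ => by
          rw [hv1 i, hv2 i, hv3 i, hv4 i, hv5 i, hv6 i, hv7 i, hv8 i, hv9 i]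
      rw [hbrw] at hh2
      rw [← Finset.sum_sdiff hFsub, hsumF, hsumGF, ← pattern μ1, ← add_assoc]
      exact hh2
    have hqpos : 0 < β q := by
      simp only [hβdef]; rw [if_pos hqC]; exact hαCpos q hqC
    have hexμ : (0 < ∑ i : Fin d, μ1 i) → ∃ i, 0 < μ1 i := by
      intro hpos
      by_contra hno
      push_neg at hno
      have : ∑ i : Fin d, μ1 i ≤ 0 := Finset.sum_nonpos fun i _ => hno i
      linarith
    have hexG : ∃ p ∈ G, 0 < γ p := by
      have hqG' := hCsub hqC
      rw [hG'] at hqG'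
      rcases Finset.mem_union.1 hqG' with hold | hnew
      · refine ⟨q, (Finset.mem_sdiff.1 hold).1, ?_⟩
        rw [hγoff q (Finset.mem_sdiff.1 hold).2]
        exact hqpos
      · have hMq : 0 < ∑ i : Fin d, μ1 i := by
          rcases Finset.mem_union.1 hnew with h5 | hB
          · rw [hfivedef] at h5
            simp only [Finset.mem_insert, Finset.mem_singleton] at h5
            rcases h5 with hqe | hqe | hqe | hqe | hqe
            · rw [hqe, hT1v] at hqpos; exact hqpos
            · rw [hqe, hT2v] at hqpos; exact hqpos
            · rw [hqe, hT3v] at hqpos; exact hqpos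
            · rw [hqe, hT4v] at hqpos; exact hqpos
            · rw [hqe, hT5v] at hqpos; linarith
          · obtain ⟨i, -, hB⟩ := Finset.mem_biUnion.1 hB
            rw [hblkdef] at hB
            simp only [Finset.mem_insert, Finset.mem_singleton] at hB
            have hi : 0 < μ1 i := by
              rcases hB with hqe|hqe|hqe|hqe|hqe|hqe|hqe|hqe|hqe
              · rw [hqe, hv1 i] at hqpos; exact hqpos
              · rw [hqe, hv2 i] at hqpos; exact hqpos
              · rw [hqe, hv3 i] at hqpos; exact hqpos
              · rw [hqe, hv4 i] at hqpos; exact hqpos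
              · rw [hqe, hv5 i] at hqpos; exact hqpos
              · rw [hqe, hv6 i] at hqpos; exact hqpos
              · rw [hqe, hv7 i] at hqpos; exact hqpos
              · rw [hqe, hv8 i] at hqpos; exact hqpos
              · rw [hqe, hv9 i] at hqpos; exact hqpos
            have hle : μ1 i ≤ ∑ j : Fin d, μ1 j :=
              Finset.single_le_sum (fun j _ => hμ1nn j) (Finset.mem_univ i)
            linarith
        obtain ⟨i, hi⟩ := hexμ hMq
        exact ⟨(a, b i, c i), hmem i, by rw [hγF i]; exact hi⟩
    have hC0 : IsCycleOn G (G.filter fun p => 0 < γ p) := by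
      obtain ⟨p0, hp0G, hp0⟩ := hexG
      refine ⟨⟨p0, Finset.mem_filter.2 ⟨hp0G, hp0⟩⟩, Finset.filter_subset _ _, γ,
        fun p hp => (Finset.mem_filter.1 hp).2, ?_⟩
      rw [Finset.sum_subset (Finset.filter_subset _ G) (fun p hpG hpn => ?_)]
      · exact hγsum
      · have hnotpos : ¬ 0 < γ p := fun hc' => hpn (Finset.mem_filter.2 ⟨hpG, hc'⟩)
        have : γ p = 0 := le_antisymm (not_lt.1 hnotpos) (hγnn p)
        rw [this, zero_smul]
    have hall := hGuniq _ hC0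
    have hγpos : ∀ p ∈ G, 0 < γ p := by
      intro p hp
      have hpf : p ∈ G.filter fun p => 0 < γ p := by rw [hall]; exact hp
      exact (Finset.mem_filter.1 hpf).2
    have hμ1pos : ∀ i, 0 < μ1 i := fun i => by
      rw [← hγF i]; exact hγpos _ (hmem i)
    have hMpos1 : 0 < ∑ i : Fin d, μ1 i :=
      Finset.sum_pos (fun i _ => hμ1pos i) ⟨i₀, Finset.mem_univ i₀⟩
    refine Finset.Subset.antisymm hCsub (fun p hpG' => ?_)
    apply hβposC
    rw [hG'] at hpG'
    rcases Finset.mem_union.1 hpG' with hold | hnew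
    · have hp2 := Finset.mem_sdiff.1 hold
      rw [← hγoff p hp2.2]
      exact hγpos p hp2.1
    · rcases Finset.mem_union.1 hnew with h5 | hB
      · rw [hfivedef] at h5
        simp only [Finset.mem_insert, Finset.mem_singleton] at h5
        rcases h5 with hqe | hqe | hqe | hqe | hqe <;> rw [hqe]
        · rw [hT1v]; exact hMpos1
        · rw [hT2v]; exact hMpos1
        · rw [hT3v]; exact hMpos1
        · rw [hT4v]; exact hMpos1
        · rw [hT5v]; linarith
      · obtain ⟨i, -, hB⟩ := Finset.mem_biUnion.1 hB
        rw [hblkdef] at hB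
        simp only [Finset.mem_insert, Finset.mem_singleton] at hB
        rcases hB with hqe|hqe|hqe|hqe|hqe|hqe|hqe|hqe|hqe <;> rw [hqe]
        · rw [hv1 i]; exact hμ1pos i
        · rw [hv2 i]; exact hμ1pos i
        · rw [hv3 i]; exact hμ1pos i
        · rw [hv4 i]; exact hμ1pos i
        · rw [hv5 i]; exact hμ1pos i
        · rw [hv6 i]; exact hμ1pos i
        · rw [hv7 i]; exact hμ1pos i
        · rw [hv8 i]; exact hμ1pos i
        · rw [hv9 i]; exact hμ1pos i

  exact ⟨⟨hAcyc, hBuniq⟩, hvcard, hcardG', hstar⟩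
end
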